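/- arXiv:2207.02010 — 6 statements merged into one kernel-verified Lean document; each statement's English description precedes it below -/
import Mathlib

section
/- Let g ∈ G₁ and suppose I_g = I_φ for some φ ∈ (0,π), where I_g = −(1/π)∫_ℂ g(u)/(conj(u+1)·(u−1)) da(u) and I_φ is the corresponding integral for the indicator function of D_φ. Then g equals the indicator function of D_φ almost everywhere. -/
open MeasureTheory

/-- `I_g = -(1/π) ∫_ℂ g(u)/(conj(u+1)·(u-1)) da(u)`. -/
noncomputable def Ig (g : ℂ → ℝ) : ℂ :=
  -(1 / Real.pi : ℂ) * ∫ u : ℂ, (g u : ℂ) / ((starRingEnd ℂ) (u + 1) * (u - 1))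

/-- The indicator function `g_θ` of the open disc `D_θ` of radius `csc θ` centered at `i·cot θ`. -/
noncomputable def gtheta (θ : ℝ) : ℂ → ℝ :=
  Set.indicator (Metric.ball (Complex.I * (Real.cot θ : ℂ)) ((Real.sin θ)⁻¹)) 1

section Aux
open Metric Set Filter
open scoped ENNReal NNReal


lemma integrableOn_inv_norm_sub (c : ℂ) :
    IntegrableOn (fun u : ℂ => ‖u - c‖⁻¹) (ball c 1) volume := by
  have hmeas : Measurable fun u : ℂ => ‖u - c‖⁻¹ := (measurable_id.sub_const c).norm.inv
  refine ⟨hmeas.aestronglyMeasurable, ?_⟩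
  have h0 : ∀ x : ℂ, 0 ≤ ‖x - c‖⁻¹ := fun x => by positivity
  rw [HasFiniteIntegral, lintegral_enorm_of_nonneg h0,
    lintegral_eq_lintegral_meas_le (volume.restrict (ball c 1))
      (Eventually.of_forall h0) hmeas.aemeasurable]
  set f := fun t : ℝ => (volume.restrict (ball c 1)) {a : ℂ | t ≤ ‖a - c‖⁻¹} with hf
  calc
    ∫⁻ t in Ioi 0, f t ≤ ∫⁻ t in Ioc 0 1 ∪ Ioi 1, f t :=
      lintegral_mono_set Ioi_subset_Ioc_union_Ioi
    _ ≤ (∫⁻ t in Ioc 0 1, f t) + ∫⁻ t in Ioi 1, f t := lintegral_union_le _ _ _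
    _ < ∞ := ENNReal.add_lt_top.2 ⟨?_, ?_⟩
  · have hb : ∀ t ∈ Ioc (0:ℝ) 1, f t ≤ ENNReal.ofReal 1 ^ 2 * NNReal.pi := by
      intro t _
      calc f t ≤ (volume.restrict (ball c 1)) univ := measure_mono (subset_univ _)
        _ = volume (ball c 1) := Measure.restrict_apply_univ _
        _ = ENNReal.ofReal 1 ^ 2 * NNReal.pi := Complex.volume_ball c 1
    calc (∫⁻ t in Ioc 0 1, f t) ≤ ∫⁻ _ in Ioc (0:ℝ) 1, ENNReal.ofReal 1 ^ 2 * NNReal.pi :=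
          setLIntegral_mono' measurableSet_Ioc hb
      _ = (ENNReal.ofReal 1 ^ 2 * NNReal.pi) * volume (Ioc (0:ℝ) 1) := setLIntegral_const _ _
      _ < ∞ := by
          apply ENNReal.mul_lt_top
          · exact ENNReal.mul_lt_top (by simp) ENNReal.coe_lt_top
          · simp [Real.volume_Ioc]
  · have hb : ∀ t ∈ Ioi (1:ℝ), f t ≤ ENNReal.ofReal (Real.pi * t ^ (-2 : ℝ)) := by
      intro t ht
      have ht0 : (0:ℝ) < t := lt_trans one_pos ht
      have hsub : {a : ℂ | t ≤ ‖a - c‖⁻¹} ⊆ closedBall c t⁻¹ := by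
        intro a ha
        simp only [mem_setOf_eq] at ha
        rw [mem_closedBall, dist_eq_norm]
        rcases eq_or_lt_of_le (norm_nonneg (a - c)) with h | h
        · rw [← h]; positivity
        · have h1 : ‖a - c‖ * t ≤ 1 := by
            calc ‖a - c‖ * t ≤ ‖a - c‖ * ‖a - c‖⁻¹ := by gcongr
              _ = 1 := mul_inv_cancel₀ (ne_of_gt h)
          rw [← one_div]
          exact (le_div_iff₀ ht0).mpr h1
      calc f t ≤ volume {a : ℂ | t ≤ ‖a - c‖⁻¹} := Measure.restrict_le_self _
        _ ≤ volume (closedBall c t⁻¹) := measure_mono hsub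
        _ = ENNReal.ofReal t⁻¹ ^ 2 * NNReal.pi := Complex.volume_closedBall c t⁻¹
        _ = ENNReal.ofReal (Real.pi * t ^ (-2 : ℝ)) := by
            rw [← ENNReal.ofReal_pow (by positivity), ← NNReal.coe_real_pi,
              ENNReal.ofReal_coe_nnreal.symm, ← ENNReal.ofReal_mul (by positivity)]
            congr 1
            rw [mul_comm]
            congr 1
            rw [← Real.rpow_natCast (t⁻¹) 2, ← Real.rpow_neg_one t, ← Real.rpow_mul ht0.le]
            norm_num
    have hint : IntegrableOn (fun t : ℝ => Real.pi * t ^ (-2 : ℝ)) (Ioi (1:ℝ)) volume :=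
      (integrableOn_Ioi_rpow_of_lt (by norm_num) one_pos).const_mul Real.pi
    calc (∫⁻ t in Ioi 1, f t) ≤ ∫⁻ t in Ioi (1:ℝ), ENNReal.ofReal (Real.pi * t ^ (-2:ℝ)) :=
          setLIntegral_mono' measurableSet_Ioi hb
      _ < ∞ := hint.setLIntegral_lt_top

lemma integrableOn_inv_norm_sub_closedBall (c : ℂ) (R : ℝ) :
    IntegrableOn (fun u : ℂ => ‖u - c‖⁻¹) (closedBall 0 R) volume := by
  have h1 : IntegrableOn (fun u : ℂ => ‖u - c‖⁻¹) (closedBall 0 R ∩ ball c 1) volume :=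
    (integrableOn_inv_norm_sub c).mono_set inter_subset_right
  have h2 : IntegrableOn (fun u : ℂ => ‖u - c‖⁻¹) (closedBall 0 R \ ball c 1) volume := by
    have hb : IntegrableOn (fun _ : ℂ => (1:ℝ)) (closedBall 0 R \ ball c 1) volume := by
      apply (integrableOn_const_iff (C := (1:ℝ)) (by simp)).2
      right
      exact lt_of_le_of_lt (measure_mono diff_subset) measure_closedBall_lt_top
    apply Integrable.mono' hb
    · exact ((measurable_id.sub_const c).norm.inv).aestronglyMeasurable.restrict
    · filter_upwards [ae_restrict_mem (measurableSet_closedBall.diff measurableSet_ball)]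
        with u hu
      have : (1:ℝ) ≤ ‖u - c‖ := by
        have := hu.2
        rw [mem_ball, dist_eq_norm] at this
        linarith [not_lt.mp this]
      rw [Real.norm_eq_abs, abs_of_nonneg (by positivity)]
      exact inv_le_one_of_one_le₀ this
  simpa [inter_union_diff] using h1.union h2

noncomputable def Kk (u : ℂ) : ℂ := ((starRingEnd ℂ) (u + 1) * (u - 1))⁻¹

lemma Kk_norm_le (u : ℂ) : ‖Kk u‖ ≤ ‖u - 1‖⁻¹ + ‖u - (-1)‖⁻¹ := by
  have hnorm : ‖Kk u‖ = (‖u + 1‖ * ‖u - 1‖)⁻¹ := by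
    rw [Kk, norm_inv, norm_mul, RCLike.norm_conj]
  rw [hnorm]
  set a := ‖u + 1‖ with ha
  set b := ‖u - 1‖ with hb
  have ha0 : 0 ≤ a := norm_nonneg _
  have hb0 : 0 ≤ b := norm_nonneg _
  have hab : 2 ≤ a + b := by
    have : (2:ℝ) = ‖(u+1) - (u-1)‖ := by norm_num
    calc (2:ℝ) = ‖(u+1) - (u-1)‖ := this
      _ ≤ ‖u+1‖ + ‖u-1‖ := norm_sub_le _ _
  have huneg : u - (-1) = u + 1 := by ring
  rw [huneg]
  rcases eq_or_lt_of_le ha0 with h | h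
  · rw [← h, zero_mul, inv_zero]
    positivity
  rcases eq_or_lt_of_le hb0 with h' | h'
  · rw [← h', mul_zero, inv_zero]
    positivity
  · show (a * b)⁻¹ ≤ b⁻¹ + a⁻¹
    have e1 : (a * b)⁻¹ = 1 / (a * b) := one_div _ |>.symm
    have e2 : b⁻¹ + a⁻¹ = (a + b) / (a * b) := by
      rw [inv_add_inv (ne_of_gt h') (ne_of_gt h)]; ring_nf
    rw [e1, e2]
    exact div_le_div₀ (by linarith) (by linarith) (by positivity) le_rfl

lemma Kk_measurable : Measurable Kk := by
  have hw : Measurable fun u : ℂ => (starRingEnd ℂ) (u + 1) * (u - 1) :=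
    (Complex.continuous_conj.measurable.comp (measurable_id.add_const 1)).mul
      (measurable_id.sub_const 1)
  have : Kk = fun u => (starRingEnd ℂ) ((starRingEnd ℂ) (u + 1) * (u - 1))
      * ((Complex.normSq ((starRingEnd ℂ) (u + 1) * (u - 1)))⁻¹ : ℝ) := by
    funext u
    rw [Kk, Complex.inv_def]
  rw [this]
  exact (Complex.continuous_conj.measurable.comp hw).mul
    (Complex.measurable_ofReal.comp ((Complex.continuous_normSq.measurable.comp hw)).inv)

lemma integrable_mul_Kk (g : ℂ → ℝ) (hmeas : Measurable g)
    (R : ℝ) (hR : ∀ᵐ u : ℂ ∂volume, R < ‖u‖ → g u = 0)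
    (hbd : ∀ᵐ u : ℂ ∂volume, 0 ≤ g u ∧ g u ≤ 1) :
    Integrable (fun u : ℂ => (g u : ℂ) * Kk u) volume := by
  set B : ℂ → ℝ := (closedBall (0:ℂ) R).indicator (fun u => ‖u - 1‖⁻¹ + ‖u - (-1)‖⁻¹) with hB
  have hBint : Integrable B volume := by
    rw [hB]
    rw [integrable_indicator_iff measurableSet_closedBall]
    exact (integrableOn_inv_norm_sub_closedBall 1 R).add
      (integrableOn_inv_norm_sub_closedBall (-1) R)
  apply Integrable.mono' hBint
  · exact ((Complex.measurable_ofReal.comp hmeas).mul Kk_measurable).aestronglyMeasurable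
  · filter_upwards [hR, hbd] with u hu1 hu2
    rw [norm_mul, Complex.norm_real, Real.norm_eq_abs]
    by_cases hcase : ‖u‖ ≤ R
    · have humem : u ∈ closedBall (0:ℂ) R := by
        rw [mem_closedBall, Complex.dist_eq, sub_zero]
        exact hcase
      rw [hB, indicator_of_mem humem]
      calc |g u| * ‖Kk u‖ ≤ 1 * (‖u - 1‖⁻¹ + ‖u - (-1)‖⁻¹) := by
            apply mul_le_mul _ (Kk_norm_le u) (norm_nonneg _) zero_le_one
            rw [abs_of_nonneg hu2.1]; exact hu2.2
        _ = _ := one_mul _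
    · rw [hu1 (not_le.mp hcase)]
      simp only [abs_zero, zero_mul]
      rw [hB]
      apply indicator_nonneg
      intro x _
      positivity

noncomputable def hker (φ : ℝ) (u : ℂ) : ℝ := (Complex.I * Complex.exp (φ * Complex.I) * Kk u).re

lemma normSq_center (φ : ℝ) (u : ℂ) :
    Complex.normSq (u - Complex.I * (Real.cot φ : ℂ)) = u.re^2 + (u.im - Real.cot φ)^2 := by
  simp only [Complex.normSq_apply, Complex.sub_re, Complex.sub_im, Complex.mul_re,
    Complex.mul_im, Complex.I_re, Complex.I_im, Complex.ofReal_re, Complex.ofReal_im]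
  ring

lemma mem_ball_iff_quad {φ : ℝ} (hφ : φ ∈ Set.Ioo (0:ℝ) Real.pi) (u : ℂ) :
    u ∈ ball (Complex.I * (Real.cot φ : ℂ)) ((Real.sin φ)⁻¹) ↔
      u.re^2 * Real.sin φ^2 + (u.im * Real.sin φ - Real.cos φ)^2 < 1 := by
  have hs : 0 < Real.sin φ := Real.sin_pos_of_pos_of_lt_pi hφ.1 hφ.2
  rw [mem_ball, Complex.dist_eq, Complex.norm_def, Real.sqrt_lt' (by positivity),
    normSq_center, Real.cot_eq_cos_div_sin]
  have e : u.re^2 * Real.sin φ^2 + (u.im * Real.sin φ - Real.cos φ)^2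
      = (u.re^2 + (u.im - Real.cos φ / Real.sin φ)^2) * Real.sin φ^2 := by
    field_simp
  have e2 : ((Real.sin φ)⁻¹)^2 * Real.sin φ^2 = 1 := by
    field_simp
  constructor
  · intro h
    rw [e, ← e2]
    exact mul_lt_mul_of_pos_right h (by positivity)
  · intro h
    rw [e, ← e2] at h
    exact lt_of_mul_lt_mul_right h (by positivity)

lemma quad_of_not_mem_closedBall {φ : ℝ} (hφ : φ ∈ Set.Ioo (0:ℝ) Real.pi) {u : ℂ}
    (hu : u ∉ closedBall (Complex.I * (Real.cot φ : ℂ)) ((Real.sin φ)⁻¹)) :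
    1 < u.re^2 * Real.sin φ^2 + (u.im * Real.sin φ - Real.cos φ)^2 := by
  have hs : 0 < Real.sin φ := Real.sin_pos_of_pos_of_lt_pi hφ.1 hφ.2
  rw [mem_closedBall, not_le, Complex.dist_eq, Complex.norm_def] at hu
  rw [Real.lt_sqrt (by positivity)] at hu
  rw [normSq_center, Real.cot_eq_cos_div_sin] at hu
  have e : u.re^2 * Real.sin φ^2 + (u.im * Real.sin φ - Real.cos φ)^2
      = (u.re^2 + (u.im - Real.cos φ / Real.sin φ)^2) * Real.sin φ^2 := by
    field_simp
  have e2 : ((Real.sin φ)⁻¹)^2 * Real.sin φ^2 = 1 := by field_simp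
  rw [e, ← e2]
  exact mul_lt_mul_of_pos_right hu (by positivity)

lemma hker_eq (φ : ℝ) (u : ℂ) :
    hker φ u = (2 * u.im * Real.cos φ - (u.re^2 + u.im^2 - 1) * Real.sin φ)
      * (((u.re^2 + u.im^2 - 1)^2 + 4 * u.im^2))⁻¹ := by
  rw [hker, Kk, Complex.inv_def]
  simp only [Complex.mul_re, Complex.mul_im, Complex.normSq_apply, Complex.add_re,
    Complex.add_im, Complex.sub_re, Complex.sub_im, Complex.one_re, Complex.one_im,
    Complex.I_re, Complex.I_im, Complex.ofReal_re, Complex.ofReal_im,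
    Complex.exp_ofReal_mul_I_re, Complex.exp_ofReal_mul_I_im, Complex.conj_re, Complex.conj_im]
  ring_nf

lemma hker_pos {φ : ℝ} (hφ : φ ∈ Set.Ioo (0:ℝ) Real.pi) {u : ℂ}
    (hu : u ∈ ball (Complex.I * (Real.cot φ : ℂ)) ((Real.sin φ)⁻¹)) :
    0 < hker φ u := by
  have hs : 0 < Real.sin φ := Real.sin_pos_of_pos_of_lt_pi hφ.1 hφ.2
  have hsc : Real.sin φ^2 + Real.cos φ^2 = 1 := Real.sin_sq_add_cos_sq φ
  have hq := (mem_ball_iff_quad hφ u).1 hu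
  have hN : 0 < 2 * u.im * Real.cos φ - (u.re^2 + u.im^2 - 1) * Real.sin φ := by
    nlinarith [hq, hsc, hs, mul_pos hs hs]
  have hD : 0 < (u.re^2 + u.im^2 - 1)^2 + 4 * u.im^2 := by
    nlinarith [hN, sq_nonneg (2 * u.im * Real.sin φ + (u.re^2 + u.im^2 - 1) * Real.cos φ),
      hsc, mul_pos hN hN]
  rw [hker_eq]
  exact mul_pos hN (inv_pos.2 hD)

lemma hker_nonpos {φ : ℝ} (hφ : φ ∈ Set.Ioo (0:ℝ) Real.pi) {u : ℂ}
    (hu : u ∉ ball (Complex.I * (Real.cot φ : ℂ)) ((Real.sin φ)⁻¹)) :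
    hker φ u ≤ 0 := by
  have hs : 0 < Real.sin φ := Real.sin_pos_of_pos_of_lt_pi hφ.1 hφ.2
  have hsc : Real.sin φ^2 + Real.cos φ^2 = 1 := Real.sin_sq_add_cos_sq φ
  have hq : 1 ≤ u.re^2 * Real.sin φ^2 + (u.im * Real.sin φ - Real.cos φ)^2 :=
    not_lt.mp (fun hc => hu ((mem_ball_iff_quad hφ u).2 hc))
  have hN : 2 * u.im * Real.cos φ - (u.re^2 + u.im^2 - 1) * Real.sin φ ≤ 0 := by
    nlinarith [hq, hsc, hs, mul_pos hs hs]
  rw [hker_eq]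
  exact mul_nonpos_of_nonpos_of_nonneg hN (inv_nonneg.2 (by positivity))

lemma hker_neg {φ : ℝ} (hφ : φ ∈ Set.Ioo (0:ℝ) Real.pi) {u : ℂ}
    (hu : u ∉ closedBall (Complex.I * (Real.cot φ : ℂ)) ((Real.sin φ)⁻¹)) :
    hker φ u < 0 := by
  have hs : 0 < Real.sin φ := Real.sin_pos_of_pos_of_lt_pi hφ.1 hφ.2
  have hsc : Real.sin φ^2 + Real.cos φ^2 = 1 := Real.sin_sq_add_cos_sq φ
  have hq := quad_of_not_mem_closedBall hφ hu
  have hN : 2 * u.im * Real.cos φ - (u.re^2 + u.im^2 - 1) * Real.sin φ < 0 := by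
    nlinarith [hq, hsc, hs, mul_pos hs hs]
  have hD : 0 < (u.re^2 + u.im^2 - 1)^2 + 4 * u.im^2 := by
    nlinarith [hN, sq_nonneg (2 * u.im * Real.sin φ + (u.re^2 + u.im^2 - 1) * Real.cos φ),
      hsc, mul_pos_of_neg_of_neg hN hN]
  rw [hker_eq]
  exact mul_neg_of_neg_of_pos hN (inv_pos.2 hD)

lemma hker_ae_ne {φ : ℝ} (hφ : φ ∈ Set.Ioo (0:ℝ) Real.pi) :
    ∀ᵐ u : ℂ ∂volume, hker φ u ≠ 0 := by
  have hsub : {u : ℂ | ¬ hker φ u ≠ 0} ⊆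
      sphere (Complex.I * (Real.cot φ : ℂ)) ((Real.sin φ)⁻¹) := by
    intro u hu
    simp only [mem_setOf_eq, not_not] at hu
    rcases lt_trichotomy (dist u (Complex.I * (Real.cot φ : ℂ))) ((Real.sin φ)⁻¹) with h | h | h
    · exact absurd hu (ne_of_gt (hker_pos hφ (mem_ball.mpr h)))
    · exact h
    · exact absurd hu (ne_of_lt (hker_neg hφ (by simpa [mem_closedBall, not_le] using h)))
  rw [ae_iff]
  exact measure_mono_null hsub (Measure.addHaar_sphere volume _ _)

end Aux

open Metric Set Filter in
/-- If `g ∈ G₁` satisfies `I_g = I_φ` for some `φ ∈ (0,π)`, then `g = g_φ` a.e. -/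

theorem eq_discIndicator_of_Ig_eq
    (g : ℂ → ℝ) (hmeas : Measurable g)
    (hsupp : ∃ R : ℝ, ∀ᵐ u : ℂ ∂volume, R < ‖u‖ → g u = 0)
    (hbd : ∀ᵐ u : ℂ ∂volume, 0 ≤ g u ∧ g u ≤ 1)
    (φ : ℝ) (hφ : φ ∈ Set.Ioo (0 : ℝ) Real.pi)
    (h : Ig g = Ig (gtheta φ)) :
    g =ᵐ[volume] gtheta φ := by
  obtain ⟨R, hR⟩ := hsupp
  -- properties of `gtheta φ`
  have hθmeas : Measurable (gtheta φ) := by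
    unfold gtheta
    exact measurable_one.indicator measurableSet_ball
  have hθbd : ∀ u : ℂ, 0 ≤ gtheta φ u ∧ gtheta φ u ≤ 1 := by
    intro u
    unfold gtheta
    by_cases hu : u ∈ ball (Complex.I * (Real.cot φ : ℂ)) ((Real.sin φ)⁻¹)
    · rw [Set.indicator_of_mem hu]
      exact ⟨zero_le_one, le_refl 1⟩
    · rw [Set.indicator_of_notMem hu]
      exact ⟨le_refl 0, zero_le_one⟩
  have hθsupp : ∀ u : ℂ,
      ‖Complex.I * (Real.cot φ : ℂ)‖ + (Real.sin φ)⁻¹ < ‖u‖ →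
      gtheta φ u = 0 := by
    intro u hu
    unfold gtheta
    apply Set.indicator_of_notMem
    intro hmem
    rw [mem_ball, Complex.dist_eq] at hmem
    have h1 : ‖u‖ - ‖Complex.I * (Real.cot φ : ℂ)‖ ≤
        ‖u - Complex.I * (Real.cot φ : ℂ)‖ := by
      simpa using norm_sub_norm_le u (Complex.I * (Real.cot φ : ℂ))
    linarith
  -- integrability of the two integrands
  have hgint : Integrable (fun u : ℂ => (g u : ℂ) * Kk u) volume :=
    integrable_mul_Kk g hmeas R hR hbd
  have hθint : Integrable (fun u : ℂ => (gtheta φ u : ℂ) * Kk u) volume :=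
    integrable_mul_Kk (gtheta φ) hθmeas _ (ae_of_all _ hθsupp) (ae_of_all _ hθbd)
  -- the two integrals agree
  have hIeq : ∫ u : ℂ, (g u : ℂ) * Kk u = ∫ u : ℂ, (gtheta φ u : ℂ) * Kk u := by
    have hne : (-(1 / Real.pi : ℂ)) ≠ 0 := by
      simp [Real.pi_ne_zero]
    have h' := h
    rw [Ig, Ig] at h'
    simp_rw [div_eq_mul_inv] at h'
    exact mul_left_cancel₀ hne h'
  set cφ : ℂ := Complex.I * Complex.exp (φ * Complex.I) with hcφ
  have key : (fun u : ℂ => ((g u - gtheta φ u : ℝ) : ℂ) * Kk u)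
      = fun u : ℂ => (g u : ℂ) * Kk u - (gtheta φ u : ℂ) * Kk u := by
    funext u
    push_cast
    ring
  have hsubint : Integrable (fun u : ℂ => ((g u - gtheta φ u : ℝ) : ℂ) * Kk u) volume := by
    rw [key]
    exact hgint.sub hθint
  have hintzero : ∫ u : ℂ, ((g u - gtheta φ u : ℝ) : ℂ) * Kk u = 0 := by
    rw [key, integral_sub hgint hθint, hIeq, sub_self]
  have hkermul : ∀ u : ℂ, (cφ * (((g u - gtheta φ u : ℝ) : ℂ) * Kk u)).re
      = (g u - gtheta φ u) * hker φ u := by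
    intro u
    have : cφ * (((g u - gtheta φ u : ℝ) : ℂ) * Kk u)
        = ((g u - gtheta φ u : ℝ) : ℂ) * (cφ * Kk u) := by ring
    rw [this, Complex.re_ofReal_mul, hcφ, hker]
  have hψint : Integrable (fun u : ℂ => (g u - gtheta φ u) * hker φ u) volume := by
    have h1 := (hsubint.const_mul cφ).re
    apply h1.congr
    exact ae_of_all _ fun u => hkermul u
  have hψzero : ∫ u : ℂ, (g u - gtheta φ u) * hker φ u = 0 := by
    have h2 := integral_re (μ := volume) (hsubint.const_mul cφ)
    rw [integral_const_mul, hintzero, mul_zero] at h2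
    calc ∫ u : ℂ, (g u - gtheta φ u) * hker φ u
        = ∫ u : ℂ, (cφ * (((g u - gtheta φ u : ℝ) : ℂ) * Kk u)).re := by
          congr 1
          funext u
          rw [hkermul]
      _ = 0 := by
          simpa [RCLike.re_to_complex] using h2
  have hnonpos : ∀ᵐ u : ℂ ∂volume, (g u - gtheta φ u) * hker φ u ≤ 0 := by
    filter_upwards [hbd] with u hu
    by_cases hmem : u ∈ ball (Complex.I * (Real.cot φ : ℂ)) ((Real.sin φ)⁻¹)
    · have hθ1 : gtheta φ u = 1 := by
        unfold gtheta
        rw [Set.indicator_of_mem hmem]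
        rfl
      rw [hθ1]
      exact mul_nonpos_of_nonpos_of_nonneg (by linarith [hu.2]) (hker_pos hφ hmem).le
    · have hθ0 : gtheta φ u = 0 := by
        unfold gtheta
        rw [Set.indicator_of_notMem hmem]
      rw [hθ0, sub_zero]
      exact mul_nonpos_of_nonneg_of_nonpos hu.1 (hker_nonpos hφ hmem)
  have hzero_ae : (fun u : ℂ => (g u - gtheta φ u) * hker φ u) =ᵐ[volume] 0 := by
    have hneg : 0 ≤ᵐ[volume] fun u : ℂ => -((g u - gtheta φ u) * hker φ u) := by
      filter_upwards [hnonpos] with u hu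
      simpa using hu
    have hnegzero : ∫ u : ℂ, -((g u - gtheta φ u) * hker φ u) = 0 := by
      rw [integral_neg, hψzero, neg_zero]
    have := (integral_eq_zero_iff_of_nonneg_ae hneg hψint.neg).1 hnegzero
    filter_upwards [this] with u hu
    simpa using hu
  filter_upwards [hzero_ae, hker_ae_ne hφ] with u h1 h2
  have h3 : (g u - gtheta φ u) * hker φ u = 0 := h1
  rcases mul_eq_zero.1 h3 with h4 | h4
  · linarith [sub_eq_zero.1 h4]
  · exact absurd h4 h2
end

section
/- Let θ ∈ (0,π) with θ ≠ π/2, and let u ∈ ℂ lie on the circle Γ_θ of radius csc θ centered at i·cot θ, with u ≠ ±1 (so that |u| ≠ 1). Then the kernel k(u) = −(1/π)·1/(conj(u+1)·(u−1)) satisfies k(u) = (1/π)·cos θ·exp(−iθ)/(1 − |u|²). -/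
open MeasureTheory

/-- The kernel `k(u) = -(1/π)·1/(conj(u+1)·(u-1))`. -/
noncomputable def kker (u : ℂ) : ℂ :=
  -(1 / Real.pi : ℂ) * (1 / ((starRingEnd ℂ) (u + 1) * (u - 1)))

/-- For `θ ∈ (0,π)`, `θ ≠ π/2`, and `u ≠ ±1` on the circle `Γ_θ` of radius `csc θ`
centered at `i·cot θ`, the kernel satisfies `k(u) = (1/π)·cos θ·e^{-iθ}/(1-|u|²)`. -/
theorem kernel_on_circle
    (θ : ℝ) (hθ : θ ∈ Set.Ioo (0 : ℝ) Real.pi) (hθ' : θ ≠ Real.pi / 2)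
    (u : ℂ) (hu : ‖u - Complex.I * (Real.cot θ : ℂ)‖ = (Real.sin θ)⁻¹)
    (hu1 : u ≠ 1) (hu2 : u ≠ -1) :
    kker u = (1 / Real.pi : ℂ) * ((Real.cos θ : ℂ) * Complex.exp (-(Complex.I * θ))) /
      (1 - (‖u‖ : ℂ) ^ 2) := by
  have hs : 0 < Real.sin θ := Real.sin_pos_of_pos_of_lt_pi hθ.1 hθ.2
  have hs' : Real.sin θ ≠ 0 := hs.ne'
  have hπ : (Real.pi : ℂ) ≠ 0 := by exact_mod_cast Real.pi_ne_zero
  have hc : Real.cos θ ≠ 0 := by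
    intro h
    rw [Real.cos_eq_zero_iff] at h
    obtain ⟨n, hn⟩ := h
    have h0 : (0:ℝ) < Real.pi := Real.pi_pos
    obtain ⟨h1, h2⟩ := hθ
    have hn0 : n = 0 := by
      by_contra hne
      rcases lt_or_gt_of_ne hne with hlt | hgt
      · have : (2*(n:ℝ)+1) ≤ -1 := by
          have : (n:ℝ) ≤ -1 := by exact_mod_cast (by omega : n ≤ -1)
          linarith
        nlinarith
      · have : (3:ℝ) ≤ 2*(n:ℝ)+1 := by
          have : (1:ℝ) ≤ (n:ℝ) := by exact_mod_cast hgt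
          linarith
        nlinarith
    apply hθ'
    rw [hn, hn0]; push_cast; ring
  -- circle relation
  have hpy := Real.sin_sq_add_cos_sq θ
  have h2 : u.re^2 + u.im^2 = 1 + 2*u.im*(Real.cos θ/Real.sin θ) := by
    have h := congrArg (· ^ 2) hu
    simp only [Complex.sq_norm] at h
    rw [Complex.normSq_apply] at h
    simp only [Complex.sub_re, Complex.sub_im, Complex.mul_re, Complex.mul_im,
      Complex.I_re, Complex.I_im, Complex.ofReal_re, Complex.ofReal_im] at h
    rw [Real.cot_eq_cos_div_sin] at h
    field_simp at h
    have h2' : u.re^2 * Real.sin θ^2 + (u.im * Real.sin θ - Real.cos θ)^2 = 1 := by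
      have h' : (u.re^2 * Real.sin θ^2 + (u.im * Real.sin θ - Real.cos θ)^2) * Real.sin θ^2
          = 1 * Real.sin θ^2 := by linear_combination (Real.sin θ^2) * h
      exact mul_right_cancel₀ (pow_ne_zero 2 hs') h'
    have key : (u.re^2 + u.im^2 - (1 + 2*u.im*(Real.cos θ/Real.sin θ))) * Real.sin θ^2 = 0 := by
      field_simp
      linear_combination h2' - hpy
    rcases mul_eq_zero.1 key with hk | hk
    · linarith
    · exact absurd hk (pow_ne_zero 2 hs')
  -- u.im ≠ 0
  have hy : u.im ≠ 0 := by
    intro h0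
    have hx : (u.re - 1) * (u.re + 1) = 0 := by
      rw [h0] at h2; nlinarith [h2]
    rcases mul_eq_zero.1 hx with hx | hx
    · have hre : u.re = 1 := by linarith
      exact hu1 (Complex.ext (by simp [hre]) (by simp [h0]))
    · have hre : u.re = -1 := by linarith
      exact hu2 (Complex.ext (by simp [hre]) (by simp [h0]))
  -- |u|² as re/im
  have habs : (‖u‖ : ℂ)^2 = ((u.re^2 + u.im^2 : ℝ) : ℂ) := by
    rw [show ((‖u‖ : ℂ))^2 = ((‖u‖ ^ 2 : ℝ) : ℂ) by push_cast; ring,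
      Complex.sq_norm, Complex.normSq_apply]
    push_cast; ring
  have hexp : Complex.exp (-(Complex.I * θ)) = (Real.cos θ : ℂ) - (Real.sin θ : ℂ) * Complex.I := by
    rw [show -(Complex.I * (θ:ℂ)) = ((-θ : ℝ) : ℂ) * Complex.I by push_cast; ring,
      Complex.exp_mul_I, ← Complex.ofReal_cos, ← Complex.ofReal_sin]
    push_cast
    simp [Complex.cos_neg, Complex.sin_neg]; ring
  -- nonvanishing denominators
  have hden : (1 : ℂ) - (‖u‖ : ℂ)^2 ≠ 0 := by
    rw [habs]
    rw [show (1:ℂ) - ((u.re^2 + u.im^2 : ℝ) : ℂ) = ((1 - (u.re^2 + u.im^2) : ℝ) : ℂ) by push_cast; ring]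
    rw [Complex.ofReal_ne_zero]
    rw [h2]
    intro hcon
    apply hy
    have : u.im * (Real.cos θ / Real.sin θ) = 0 := by linarith
    rcases mul_eq_zero.1 this with h | h
    · exact h
    · exact absurd h (div_ne_zero hc hs')
  have hD : (starRingEnd ℂ) (u + 1) * (u - 1) ≠ 0 := by
    apply mul_ne_zero
    · simp only [ne_eq, map_eq_zero]
      intro h; exact hu2 (by linear_combination h)
    · intro h; exact hu1 (by linear_combination h)
  -- real multiplied-out relation
  have h2s : (u.re^2 + u.im^2) * Real.sin θ = Real.sin θ + 2*u.im*Real.cos θ := by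
    rw [h2]; field_simp
  -- key algebraic identity
  have hA : (starRingEnd ℂ) u + 1 ≠ 0 := by
    intro h
    apply hu2
    have h' : u + 1 = 0 := by simpa using congrArg (starRingEnd ℂ) h
    linear_combination h'
  have hB : u - 1 ≠ 0 := sub_ne_zero.mpr hu1
  have main : ((1:ℂ) - ((u.re^2 + u.im^2 : ℝ) : ℂ)) * (-1) * (Real.sin θ : ℂ)
      = (Real.cos θ : ℂ) * ((Real.cos θ : ℂ) - (Real.sin θ : ℂ) * Complex.I)
        * ((starRingEnd ℂ) (u + 1) * (u - 1)) * (Real.sin θ : ℂ) := by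
    have hC : (starRingEnd ℂ) (u+1) = ((u.re:ℂ) - u.im * Complex.I) + 1 := by
      rw [map_add, map_one]
      rw [show (starRingEnd ℂ) u = ((u.re:ℂ) - u.im * Complex.I) by
        rw [Complex.ext_iff]; simp]
    rw [hC, show (u : ℂ) = (u.re:ℂ) + u.im * Complex.I by rw [Complex.re_add_im]]
    rw [Complex.ext_iff]
    simp only [Complex.mul_re, Complex.mul_im, Complex.add_re, Complex.add_im, Complex.sub_re,
      Complex.sub_im, Complex.one_re, Complex.one_im, Complex.I_re, Complex.I_im,
      Complex.ofReal_re, Complex.ofReal_im, Complex.neg_re, Complex.neg_im]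
    constructor
    · linear_combination (1 - Real.cos θ^2) * h2s - 2*u.im*Real.cos θ * hpy
    · linear_combination (Real.sin θ*Real.cos θ) * h2s
  have hsC : ((Real.sin θ : ℝ) : ℂ) ≠ 0 := by exact_mod_cast hs'
  have main' : ((1:ℂ) - ((u.re^2 + u.im^2 : ℝ) : ℂ)) * (-1)
      = (Real.cos θ : ℂ) * ((Real.cos θ : ℂ) - (Real.sin θ : ℂ) * Complex.I)
        * ((starRingEnd ℂ) (u + 1) * (u - 1)) := mul_right_cancel₀ hsC main
  -- main computation
  have hden' : (1:ℂ) - ((u.re^2 + u.im^2 : ℝ) : ℂ) ≠ 0 := habs ▸ hden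
  rw [kker, hexp, habs]
  rw [eq_div_iff hden']
  calc -(1 / (Real.pi:ℂ)) * (1 / ((starRingEnd ℂ) (u + 1) * (u - 1)))
        * ((1:ℂ) - ((u.re^2 + u.im^2 : ℝ) : ℂ))
      = (1 / (Real.pi:ℂ)) * (1 / ((starRingEnd ℂ) (u + 1) * (u - 1)))
        * (((1:ℂ) - ((u.re^2 + u.im^2 : ℝ) : ℂ)) * (-1)) := by ring
    _ = (1 / (Real.pi:ℂ)) * (1 / ((starRingEnd ℂ) (u + 1) * (u - 1)))
        * ((Real.cos θ : ℂ) * ((Real.cos θ : ℂ) - (Real.sin θ : ℂ) * Complex.I)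
          * ((starRingEnd ℂ) (u + 1) * (u - 1))) := by rw [main']
    _ = (1 / (Real.pi:ℂ)) * ((Real.cos θ : ℂ) * ((Real.cos θ : ℂ) - (Real.sin θ : ℂ) * Complex.I))
        * (((starRingEnd ℂ) (u + 1) * (u - 1))⁻¹ * ((starRingEnd ℂ) (u + 1) * (u - 1))) := by
          ring
    _ = 1 / (Real.pi:ℂ) * ((Real.cos θ : ℂ) * ((Real.cos θ : ℂ) - (Real.sin θ : ℂ) * Complex.I)) := by
          rw [inv_mul_cancel₀ hD, mul_one]
end

section
/- The map u(t,θ) = csc θ·exp(it) + i·cot θ restricts to a bijection from U = {(t,θ) ∈ (−π,π]×(0,π) : sin t + cos θ > 0} onto the open upper half-plane {z ∈ ℂ : Im z > 0}, and to a bijection from L = {(t,θ) ∈ (−π,π]×(0,π) : sin t + cos θ < 0} onto the open lower half-plane {z ∈ ℂ : Im z < 0}. -/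
open MeasureTheory

/-- The parametrizing map `u(t,θ) = csc θ·e^{it} + i·cot θ`. -/
noncomputable def umap (p : ℝ × ℝ) : ℂ :=
  ((Real.sin p.2)⁻¹ : ℂ) * Complex.exp (Complex.I * (p.1 : ℂ)) +
    Complex.I * (Real.cot p.2 : ℂ)

/-- The cylinder `(-π,π] × (0,π)`. -/
def Kcyl : Set (ℝ × ℝ) := Set.Ioc (-Real.pi) Real.pi ×ˢ Set.Ioo 0 Real.pi

/-- `U = {(t,θ) ∈ (-π,π]×(0,π) : sin t + cos θ > 0}`. -/
def Uset : Set (ℝ × ℝ) := {p ∈ Kcyl | 0 < Real.sin p.1 + Real.cos p.2}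

/-- `L = {(t,θ) ∈ (-π,π]×(0,π) : sin t + cos θ < 0}`. -/
def Lset : Set (ℝ × ℝ) := {p ∈ Kcyl | Real.sin p.1 + Real.cos p.2 < 0}

lemma im_umap (t θ : ℝ) : (umap (t, θ)).im = (Real.sin t + Real.cos θ) / Real.sin θ := by
  rw [umap, mul_comm Complex.I (t:ℂ), Complex.exp_mul_I, ← Complex.ofReal_cos,
    ← Complex.ofReal_sin, ← Complex.ofReal_inv]
  simp only [Complex.add_im, Complex.mul_im, Complex.ofReal_re, Complex.ofReal_im,
    Complex.I_re, Complex.I_im, Complex.add_re, Complex.mul_re]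
  rw [Real.cot_eq_cos_div_sin]
  ring

lemma umap_mul_sin (t θ : ℝ) (hs : Real.sin θ ≠ 0) :
    umap (t, θ) * (Real.sin θ : ℂ) = Complex.exp (Complex.I * t) + Complex.I * (Real.cos θ : ℂ) := by
  have hs' : (Real.sin θ : ℂ) ≠ 0 := Complex.ofReal_ne_zero.mpr hs
  have hs2 : Complex.sin (θ:ℂ) ≠ 0 := by rwa [← Complex.ofReal_sin]
  rw [umap, Real.cot_eq_cos_div_sin, Complex.ofReal_div]
  field_simp

lemma exp_I_eq_umap_sub (t θ : ℝ) (hs : Real.sin θ ≠ 0) :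
    Complex.exp (Complex.I * t)
      = umap (t, θ) * (Real.sin θ : ℂ) - Complex.I * (Real.cos θ : ℂ) := by
  rw [umap_mul_sin t θ hs]; ring

lemma cot_eq_inv_tan (x : ℝ) : Real.cot x = (Real.tan x)⁻¹ := by
  rw [Real.cot_eq_cos_div_sin, Real.tan_eq_sin_div_cos, inv_div]

lemma cot_injOn : Set.InjOn Real.cot (Set.Ioo 0 Real.pi) := by
  intro a ha b hb h
  have ha' : Real.pi/2 - a ∈ Set.Ioo (-(Real.pi/2)) (Real.pi/2) :=
    ⟨by linarith [ha.2], by linarith [ha.1]⟩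
  have hb' : Real.pi/2 - b ∈ Set.Ioo (-(Real.pi/2)) (Real.pi/2) :=
    ⟨by linarith [hb.2], by linarith [hb.1]⟩
  have htan : Real.tan (Real.pi/2 - a) = Real.tan (Real.pi/2 - b) := by
    rw [Real.tan_pi_div_two_sub, Real.tan_pi_div_two_sub, ← cot_eq_inv_tan, ← cot_eq_inv_tan, h]
  have := Real.injOn_tan ha' hb' htan
  linarith

lemma exp_I_injOn {t1 t2 : ℝ} (h1 : t1 ∈ Set.Ioc (-Real.pi) Real.pi)
    (h2 : t2 ∈ Set.Ioc (-Real.pi) Real.pi)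
    (h : Complex.exp (Complex.I * t1) = Complex.exp (Complex.I * t2)) : t1 = t2 := by
  have e1 := Complex.arg_cos_add_sin_mul_I h1
  have e2 := Complex.arg_cos_add_sin_mul_I h2
  rw [mul_comm Complex.I _, mul_comm Complex.I _, Complex.exp_mul_I, Complex.exp_mul_I] at h
  rw [← e1, ← e2, h]

lemma key_identity (t θ : ℝ) (hs : Real.sin θ ≠ 0) :
    ((umap (t,θ)).re^2 + (umap (t,θ)).im^2) * Real.sin θ^2
      - 2*Real.sin θ*Real.cos θ*(umap (t,θ)).im + Real.cos θ^2 = 1 := by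
  have h1 : Complex.normSq (Complex.exp (Complex.I * t)) = 1 := by
    rw [Complex.normSq_eq_norm_sq, mul_comm, Complex.norm_exp_ofReal_mul_I]; norm_num
  rw [exp_I_eq_umap_sub t θ hs] at h1
  simp only [Complex.normSq_apply, Complex.sub_re, Complex.sub_im, Complex.mul_re,
    Complex.mul_im, Complex.ofReal_re, Complex.ofReal_im, Complex.I_re, Complex.I_im] at h1
  nlinarith [h1]

lemma cot_of_umap {t θ : ℝ} (hθ : θ ∈ Set.Ioo 0 Real.pi) (him : (umap (t,θ)).im ≠ 0) :
    Real.cot θ = ((umap (t,θ)).re^2 + (umap (t,θ)).im^2 - 1)/(2*(umap (t,θ)).im) := by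
  have hs : 0 < Real.sin θ := Real.sin_pos_of_pos_of_lt_pi hθ.1 hθ.2
  have hkey := key_identity t θ hs.ne'
  have hsc := Real.sin_sq_add_cos_sq θ
  have h2 : Real.sin θ * (Real.sin θ * ((umap (t,θ)).re^2 + (umap (t,θ)).im^2 - 1))
      = Real.sin θ * (2 * Real.cos θ * (umap (t,θ)).im) := by nlinarith
  have h3 := mul_left_cancel₀ hs.ne' h2
  rw [Real.cot_eq_cos_div_sin]
  field_simp
  nlinarith [h3]

lemma umap_inj_aux : ∀ p ∈ Kcyl, ∀ q ∈ Kcyl, (umap p).im ≠ 0 → umap p = umap q → p = q := by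
  rintro ⟨t1, θ1⟩ ⟨ht1, hθ1⟩ ⟨t2, θ2⟩ ⟨ht2, hθ2⟩ him heq
  have him2 : (umap (t2, θ2)).im ≠ 0 := by rwa [← heq]
  have hθ : θ1 = θ2 := by
    apply cot_injOn hθ1 hθ2
    rw [cot_of_umap hθ1 him, cot_of_umap hθ2 him2, heq]
  have hs1 : Real.sin θ1 ≠ 0 := (Real.sin_pos_of_pos_of_lt_pi hθ1.1 hθ1.2).ne'
  have hexp : Complex.exp (Complex.I * t1) = Complex.exp (Complex.I * t2) := by
    rw [exp_I_eq_umap_sub t1 θ1 hs1, exp_I_eq_umap_sub t2 θ2 (hθ ▸ hs1), heq, hθ]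
  have ht : t1 = t2 := exp_I_injOn ht1 ht2 hexp
  simp [ht, hθ]

lemma umap_surj_aux {z : ℂ} (hy : z.im ≠ 0) : ∃ p ∈ Kcyl, umap p = z := by
  set r : ℝ := (z.re^2 + z.im^2 - 1)/(2*z.im) with hr
  set θ : ℝ := Real.pi/2 - Real.arctan r with hθdef
  have harct := Real.arctan_mem_Ioo r
  have hθ : θ ∈ Set.Ioo 0 Real.pi := ⟨by simp only [hθdef]; linarith [harct.2],
    by simp only [hθdef]; linarith [harct.1, Real.pi_pos]⟩
  have hs : 0 < Real.sin θ := Real.sin_pos_of_pos_of_lt_pi hθ.1 hθ.2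
  have hcot : Real.cot θ = r := by
    rw [hθdef, cot_eq_inv_tan, Real.tan_pi_div_two_sub, Real.tan_arctan, inv_inv]
  have hc : Real.cos θ = r * Real.sin θ := by
    rw [Real.cot_eq_cos_div_sin] at hcot
    field_simp at hcot
    linarith
  have h2ry : 2 * r * z.im = z.re^2 + z.im^2 - 1 := by
    rw [hr]; field_simp
  set w : ℂ := z * (Real.sin θ : ℂ) - Complex.I * (Real.cos θ : ℂ) with hw
  have hnsq : Complex.normSq w = 1 := by
    simp only [hw, Complex.normSq_apply, Complex.sub_re, Complex.sub_im, Complex.mul_re,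
      Complex.mul_im, Complex.ofReal_re, Complex.ofReal_im, Complex.I_re, Complex.I_im]
    linear_combination Real.sin_sq_add_cos_sq θ + (-2*z.im*Real.sin θ) * hc
      + (-(Real.sin θ)^2) * h2ry
  have habs : ‖w‖ = 1 := by
    rw [Complex.norm_def, hnsq, Real.sqrt_one]
  set t : ℝ := w.arg with htdef
  have ht : t ∈ Set.Ioc (-Real.pi) Real.pi := Complex.arg_mem_Ioc w
  have hexp : Complex.exp (Complex.I * t) = w := by
    have h := Complex.norm_mul_exp_arg_mul_I w
    rw [habs] at h
    rw [mul_comm]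
    simpa using h
  refine ⟨(t, θ), ⟨ht, hθ⟩, ?_⟩
  have hmul := umap_mul_sin t θ hs.ne'
  rw [hexp, hw] at hmul
  have hs' : (Real.sin θ : ℂ) ≠ 0 := Complex.ofReal_ne_zero.mpr hs.ne'
  have : umap (t, θ) * (Real.sin θ : ℂ) = z * (Real.sin θ : ℂ) := by rw [hmul]; ring
  exact mul_right_cancel₀ hs' this

lemma sin_add_cos_eq {t θ : ℝ} (hθ : θ ∈ Set.Ioo 0 Real.pi) :
    Real.sin t + Real.cos θ = (umap (t,θ)).im * Real.sin θ := by
  have hs : 0 < Real.sin θ := Real.sin_pos_of_pos_of_lt_pi hθ.1 hθ.2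
  rw [im_umap, div_mul_cancel₀ _ hs.ne']

/-- `u(t,θ)` restricts to a bijection from `U` onto the open upper half-plane and
from `L` onto the open lower half-plane. -/
theorem umap_bijOn_halfPlanes :
    Set.BijOn umap Uset {z : ℂ | 0 < z.im} ∧ Set.BijOn umap Lset {z : ℂ | z.im < 0} := by
  constructor
  · refine ⟨?_, ?_, ?_⟩
    · rintro ⟨t, θ⟩ ⟨⟨ht, hθ⟩, hpos⟩
      have hs : 0 < Real.sin θ := Real.sin_pos_of_pos_of_lt_pi hθ.1 hθ.2
      show 0 < (umap (t, θ)).im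
      rw [im_umap]
      exact div_pos hpos hs
    · rintro ⟨t1, θ1⟩ ⟨hp1, hpos1⟩ ⟨t2, θ2⟩ ⟨hp2, _⟩ heq
      have hs : 0 < Real.sin θ1 := Real.sin_pos_of_pos_of_lt_pi hp1.2.1 hp1.2.2
      have him : (umap (t1, θ1)).im ≠ 0 := by
        rw [im_umap]; exact (div_pos hpos1 hs).ne'
      exact umap_inj_aux _ hp1 _ hp2 him heq
    · rintro z hz
      have hy : z.im ≠ 0 := ne_of_gt hz
      obtain ⟨⟨t, θ⟩, hp, hu⟩ := umap_surj_aux hy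
      refine ⟨(t, θ), ⟨hp, ?_⟩, hu⟩
      have hs : 0 < Real.sin θ := Real.sin_pos_of_pos_of_lt_pi hp.2.1 hp.2.2
      have := sin_add_cos_eq (t := t) hp.2
      rw [hu] at this
      show 0 < Real.sin t + Real.cos θ
      rw [this]
      exact mul_pos hz hs
  · refine ⟨?_, ?_, ?_⟩
    · rintro ⟨t, θ⟩ ⟨⟨ht, hθ⟩, hneg⟩
      have hs : 0 < Real.sin θ := Real.sin_pos_of_pos_of_lt_pi hθ.1 hθ.2
      show (umap (t, θ)).im < 0
      rw [im_umap]
      exact div_neg_of_neg_of_pos hneg hs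
    · rintro ⟨t1, θ1⟩ ⟨hp1, hneg1⟩ ⟨t2, θ2⟩ ⟨hp2, _⟩ heq
      have hs : 0 < Real.sin θ1 := Real.sin_pos_of_pos_of_lt_pi hp1.2.1 hp1.2.2
      have him : (umap (t1, θ1)).im ≠ 0 := by
        rw [im_umap]; exact (div_neg_of_neg_of_pos hneg1 hs).ne
      exact umap_inj_aux _ hp1 _ hp2 him heq
    · rintro z hz
      have hy : z.im ≠ 0 := ne_of_lt hz
      obtain ⟨⟨t, θ⟩, hp, hu⟩ := umap_surj_aux hy
      refine ⟨(t, θ), ⟨hp, ?_⟩, hu⟩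
      have hs : 0 < Real.sin θ := Real.sin_pos_of_pos_of_lt_pi hp.2.1 hp.2.2
      have := sin_add_cos_eq (t := t) hp.2
      rw [hu] at this
      show Real.sin t + Real.cos θ < 0
      rw [this]
      exact mul_neg_of_neg_of_pos hz hs
end

section
/- Let g : ℂ → ℝ be a bounded measurable function with bounded essential support. Then the integral (1/2π)∫_{U∪L} |cot θ|·|g(u(t,θ))| dt dθ exists and is finite, where the integral is over the set of (t,θ) ∈ (−π,π]×(0,π) with sin t + cos θ ≠ 0 and u(t,θ) = csc θ·exp(it) + i·cot θ. -/
open MeasureTheory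

namespace CotUmapAux

open Real Set
open scoped ENNReal

/- === elementary facts about umap === -/

lemma exp_I_mul (t : ℝ) : Complex.exp (Complex.I * (t : ℂ)) =
    ((Real.cos t : ℂ)) + (Real.sin t : ℂ) * Complex.I := by
  rw [mul_comm, Complex.exp_mul_I, Complex.ofReal_cos, Complex.ofReal_sin]

lemma umap_re (p : ℝ × ℝ) : (umap p).re = Real.cos p.1 / Real.sin p.2 := by
  rw [umap, exp_I_mul]
  simp only [Complex.add_re, Complex.mul_re, Complex.mul_im, Complex.add_im,
    Complex.I_re, Complex.I_im, Complex.ofReal_re, Complex.ofReal_im,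
    ← Complex.ofReal_inv]
  ring

lemma umap_im (p : ℝ × ℝ) : (umap p).im = (Real.sin p.1 + Real.cos p.2) / Real.sin p.2 := by
  rw [umap, exp_I_mul]
  simp only [Complex.add_re, Complex.mul_re, Complex.mul_im, Complex.add_im,
    Complex.I_re, Complex.I_im, Complex.ofReal_re, Complex.ofReal_im,
    ← Complex.ofReal_inv]
  rw [Real.cot_eq_cos_div_sin]
  rcases eq_or_ne (Real.sin p.2) 0 with h | h
  · simp [h]
  · field_simp
    ring

/- === the real model of umap, its derivative, injectivity === -/

noncomputable def fmap (p : ℝ × ℝ) : ℝ × ℝ :=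
  (Real.cos p.1 / Real.sin p.2, (Real.sin p.1 + Real.cos p.2) / Real.sin p.2)

def Sreg : Set (ℝ × ℝ) :=
  {p | p.1 ∈ Set.Ioo (-π) π ∧ p.2 ∈ Set.Ioo 0 π ∧ Real.sin p.1 + Real.cos p.2 ≠ 0}

noncomputable def fder (p : ℝ × ℝ) : (ℝ × ℝ) →L[ℝ] (ℝ × ℝ) :=
  ((-Real.sin p.1 / Real.sin p.2) • ContinuousLinearMap.fst ℝ ℝ ℝ +
   (-(Real.cos p.1 * Real.cos p.2) / Real.sin p.2 ^ 2) • ContinuousLinearMap.snd ℝ ℝ ℝ).prod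
  ((Real.cos p.1 / Real.sin p.2) • ContinuousLinearMap.fst ℝ ℝ ℝ +
   (-(Real.sin p.1 * Real.cos p.2 + 1) / Real.sin p.2 ^ 2) • ContinuousLinearMap.snd ℝ ℝ ℝ)

lemma fder_det (p : ℝ × ℝ) (hs : Real.sin p.2 ≠ 0) :
    (fder p).det = (Real.sin p.1 + Real.cos p.2) / Real.sin p.2 ^ 3 := by
  have h : (fder p : (ℝ × ℝ) →ₗ[ℝ] (ℝ × ℝ)) =
      Matrix.toLin (Module.Basis.finTwoProd ℝ) (Module.Basis.finTwoProd ℝ)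
        !![-Real.sin p.1 / Real.sin p.2, -(Real.cos p.1 * Real.cos p.2) / Real.sin p.2 ^ 2;
           Real.cos p.1 / Real.sin p.2, -(Real.sin p.1 * Real.cos p.2 + 1) / Real.sin p.2 ^ 2] := by
    rw [fder, ← Matrix.toLin_finTwoProd_toContinuousLinearMap,
      LinearMap.coe_toContinuousLinearMap]
  have h1 : Real.sin p.1 ^ 2 + Real.cos p.1 ^ 2 = 1 := Real.sin_sq_add_cos_sq p.1
  rw [ContinuousLinearMap.det, h, LinearMap.det_toLin, Matrix.det_fin_two_of]
  field_simp
  linear_combination (Real.cos p.2) * h1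

lemma fmap_hasFDerivAt (p : ℝ × ℝ) (hs : Real.sin p.2 ≠ 0) :
    HasFDerivAt fmap (fder p) p := by
  have hft : HasFDerivAt (fun q : ℝ × ℝ => Real.cos q.1)
      ((-Real.sin p.1) • ContinuousLinearMap.fst ℝ ℝ ℝ) p := by
    exact (Real.hasDerivAt_cos p.1).comp_hasFDerivAt p (hasFDerivAt_fst (𝕜 := ℝ) (p := p))
  have hst : HasFDerivAt (fun q : ℝ × ℝ => Real.sin q.1)
      ((Real.cos p.1) • ContinuousLinearMap.fst ℝ ℝ ℝ) p := by
    exact (Real.hasDerivAt_sin p.1).comp_hasFDerivAt p (hasFDerivAt_fst (𝕜 := ℝ) (p := p))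
  have hcθ : HasFDerivAt (fun q : ℝ × ℝ => Real.cos q.2)
      ((-Real.sin p.2) • ContinuousLinearMap.snd ℝ ℝ ℝ) p := by
    exact (Real.hasDerivAt_cos p.2).comp_hasFDerivAt p (hasFDerivAt_snd (𝕜 := ℝ) (p := p))
  have hinv : HasFDerivAt (fun q : ℝ × ℝ => (Real.sin q.2)⁻¹)
      ((-Real.cos p.2 / Real.sin p.2 ^ 2) • ContinuousLinearMap.snd ℝ ℝ ℝ) p := by
    exact ((Real.hasDerivAt_sin p.2).inv hs).comp_hasFDerivAt p (hasFDerivAt_snd (𝕜 := ℝ) (p := p))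
  have h1 : HasFDerivAt (fun q : ℝ × ℝ => Real.cos q.1 * (Real.sin q.2)⁻¹)
      (Real.cos p.1 • ((-Real.cos p.2 / Real.sin p.2 ^ 2) • ContinuousLinearMap.snd ℝ ℝ ℝ) +
        (Real.sin p.2)⁻¹ • ((-Real.sin p.1) • ContinuousLinearMap.fst ℝ ℝ ℝ)) p :=
    hft.mul hinv
  have h2 : HasFDerivAt (fun q : ℝ × ℝ => (Real.sin q.1 + Real.cos q.2) * (Real.sin q.2)⁻¹)
      ((Real.sin p.1 + Real.cos p.2) • ((-Real.cos p.2 / Real.sin p.2 ^ 2) • ContinuousLinearMap.snd ℝ ℝ ℝ) +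
        (Real.sin p.2)⁻¹ • ((Real.cos p.1) • ContinuousLinearMap.fst ℝ ℝ ℝ +
          (-Real.sin p.2) • ContinuousLinearMap.snd ℝ ℝ ℝ)) p :=
    (hst.add hcθ).mul hinv
  have h3 := h1.prodMk h2
  have heq : fmap = fun q : ℝ × ℝ =>
      (Real.cos q.1 * (Real.sin q.2)⁻¹, (Real.sin q.1 + Real.cos q.2) * (Real.sin q.2)⁻¹) := by
    funext q; simp [fmap, div_eq_mul_inv]
  rw [heq]
  refine HasFDerivAt.congr_fderiv h3 ?_
  symm
  apply ContinuousLinearMap.ext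
  intro v
  simp [fder, ContinuousLinearMap.prod_apply]
  constructor
  · field_simp; ring
  · field_simp
    linear_combination (v.2) * Real.sin_sq_add_cos_sq p.2

lemma key_id (t θ : ℝ) (h : Real.sin θ ≠ 0) :
    ((Real.cos t / Real.sin θ) ^ 2 + ((Real.sin t + Real.cos θ) / Real.sin θ) ^ 2 - 1)
      * Real.sin θ = 2 * ((Real.sin t + Real.cos θ) / Real.sin θ) * Real.cos θ := by
  have h1 := Real.sin_sq_add_cos_sq t
  have h2 := Real.sin_sq_add_cos_sq θ
  field_simp
  ring_nf
  nlinarith [h1, h2]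

lemma fmap_injOn : Set.InjOn fmap Sreg := by
  rintro p ⟨hp1, hp2, hp3⟩ q ⟨hq1, hq2, hq3⟩ h
  have hsp : 0 < Real.sin p.2 := Real.sin_pos_of_pos_of_lt_pi hp2.1 hp2.2
  have hsq : 0 < Real.sin q.2 := Real.sin_pos_of_pos_of_lt_pi hq2.1 hq2.2
  have h1 : Real.cos p.1 / Real.sin p.2 = Real.cos q.1 / Real.sin q.2 :=
    congrArg Prod.fst h
  have h2 : (Real.sin p.1 + Real.cos p.2) / Real.sin p.2
      = (Real.sin q.1 + Real.cos q.2) / Real.sin q.2 := congrArg Prod.snd h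
  have hc2 : (Real.sin p.1 + Real.cos p.2) / Real.sin p.2 ≠ 0 :=
    div_ne_zero hp3 hsp.ne'
  have kp := key_id p.1 p.2 hsp.ne'
  have kq := key_id q.1 q.2 hsq.ne'
  rw [← h1, ← h2] at kq
  have hcs : Real.cos p.2 * Real.sin q.2 = Real.cos q.2 * Real.sin p.2 := by
    have e1 := congrArg (· * Real.sin q.2) kp
    have e2 := congrArg (· * Real.sin p.2) kq
    have : 2 * ((Real.sin p.1 + Real.cos p.2) / Real.sin p.2) * (Real.cos p.2 * Real.sin q.2)
        = 2 * ((Real.sin p.1 + Real.cos p.2) / Real.sin p.2) * (Real.cos q.2 * Real.sin p.2) := by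
      nlinarith [e1, e2]
    exact mul_left_cancel₀ (mul_ne_zero two_ne_zero hc2) this
  have hθ : p.2 = q.2 := by
    have hsin0 : Real.sin (p.2 - q.2) = 0 := by
      rw [Real.sin_sub]; nlinarith [hcs]
    have := (Real.sin_eq_zero_iff_of_lt_of_lt
      (by linarith [hp2.1, hp2.2, hq2.1, hq2.2] : -π < p.2 - q.2)
      (by linarith [hp2.1, hp2.2, hq2.1, hq2.2])).1 hsin0
    linarith
  have hsin : Real.sin p.1 = Real.sin q.1 := by
    rw [hθ, div_eq_div_iff hsq.ne' hsq.ne'] at h2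
    have := mul_right_cancel₀ hsq.ne' h2
    linarith
  have hcos : Real.cos p.1 = Real.cos q.1 := by
    rw [hθ, div_eq_div_iff hsq.ne' hsq.ne'] at h1
    exact mul_right_cancel₀ hsq.ne' h1
  have ht : p.1 = q.1 := by
    have hone : Real.cos (p.1 - q.1) = 1 := by
      rw [Real.cos_sub, hcos, hsin]
      linear_combination Real.sin_sq_add_cos_sq q.1
    have := (Real.cos_eq_one_iff_of_lt_of_lt
      (by linarith [hp1.1, hp1.2, hq1.1, hq1.2, Real.pi_pos] : -(2*π) < p.1 - q.1)
      (by linarith [hp1.1, hp1.2, hq1.1, hq1.2, Real.pi_pos])).1 hone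
    linarith
  exact Prod.ext ht hθ

/- === measurability === -/

lemma measurable_fmap : Measurable fmap :=
  ((Real.continuous_cos.comp continuous_fst).measurable.div
    (Real.continuous_sin.comp continuous_snd).measurable).prod
  (((Real.continuous_sin.comp continuous_fst).add
    (Real.continuous_cos.comp continuous_snd)).measurable.div
    (Real.continuous_sin.comp continuous_snd).measurable)

lemma measurable_cot_snd : Measurable fun p : ℝ × ℝ => Real.cot p.2 := by
  simp only [Real.cot_eq_cos_div_sin]
  exact (Real.measurable_cos.comp measurable_snd).div
    (Real.measurable_sin.comp measurable_snd)

lemma measurable_umap : Measurable umap := by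
  have m1 : Measurable fun p : ℝ × ℝ => ((Real.sin p.2)⁻¹ : ℂ) :=
    (Complex.measurable_ofReal.comp (Real.measurable_sin.comp measurable_snd)).inv
  have m2 : Measurable fun p : ℝ × ℝ => Complex.exp (Complex.I * (p.1 : ℂ)) :=
    Complex.continuous_exp.measurable.comp
      (measurable_const.mul (Complex.measurable_ofReal.comp measurable_fst))
  have m4 : Measurable fun p : ℝ × ℝ => Complex.I * (Real.cot p.2 : ℂ) :=
    measurable_const.mul (Complex.measurable_ofReal.comp measurable_cot_snd)
  exact (m1.mul m2).add m4

lemma measurableSet_Sreg : MeasurableSet Sreg := by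
  have h1 : IsOpen {p : ℝ × ℝ | p.1 ∈ Set.Ioo (-π) π} := isOpen_Ioo.preimage continuous_fst
  have h2 : IsOpen {p : ℝ × ℝ | p.2 ∈ Set.Ioo 0 π} := isOpen_Ioo.preimage continuous_snd
  have h3 : IsOpen {p : ℝ × ℝ | Real.sin p.1 + Real.cos p.2 ≠ 0} :=
    isOpen_compl_singleton.preimage
      ((Real.continuous_sin.comp continuous_fst).add (Real.continuous_cos.comp continuous_snd))
  have : Sreg = {p : ℝ × ℝ | p.1 ∈ Set.Ioo (-π) π} ∩
      ({p : ℝ × ℝ | p.2 ∈ Set.Ioo 0 π} ∩ {p : ℝ × ℝ | Real.sin p.1 + Real.cos p.2 ≠ 0}) := by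
    ext p; simp [Sreg, Set.mem_inter_iff, and_assoc]
  rw [this]
  exact (h1.inter (h2.inter h3)).measurableSet

/- === the preimage of a null set under umap is null on Sreg === -/

lemma null_preimage (N : Set ℂ) (hN : MeasurableSet N) (hN0 : volume N = 0) :
    volume {p ∈ Sreg | umap p ∈ N} = 0 := by
  set N₂ : Set (ℝ × ℝ) := Complex.measurableEquivRealProd.symm ⁻¹' N with hN₂def
  have hN₂ : MeasurableSet N₂ := Complex.measurableEquivRealProd.symm.measurable hN
  have hN₂0 : volume N₂ = 0 := by
    rw [(Complex.volume_preserving_equiv_real_prod.symm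
      Complex.measurableEquivRealProd).measure_preimage hN.nullMeasurableSet]
    exact hN0
  have hmem : ∀ p : ℝ × ℝ, fmap p ∈ N₂ ↔ umap p ∈ N := by
    intro p
    have : Complex.measurableEquivRealProd.symm (fmap p) = umap p := by
      rw [Complex.measurableEquivRealProd_symm_apply]
      apply Complex.ext
      · rw [umap_re]; rfl
      · rw [umap_im]; rfl
    simp only [hN₂def, Set.mem_preimage, this]
  have hs := measurableSet_Sreg
  have hf' : ∀ p ∈ Sreg, HasFDerivWithinAt fmap (fder p) Sreg p := fun p hp =>
    (fmap_hasFDerivAt p (Real.sin_pos_of_pos_of_lt_pi hp.2.1.1 hp.2.1.2).ne').hasFDerivWithinAt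
  have hcv := lintegral_image_eq_lintegral_abs_det_fderiv_mul volume hs hf' fmap_injOn
    (N₂.indicator 1)
  have himg : ∫⁻ x in fmap '' Sreg, N₂.indicator 1 x = volume (N₂ ∩ fmap '' Sreg) := by
    rw [lintegral_indicator_one hN₂, Measure.restrict_apply hN₂]
  have h0 : ∫⁻ p in Sreg, ENNReal.ofReal |(fder p).det| * N₂.indicator 1 (fmap p) = 0 := by
    rw [← hcv, himg]
    exact le_antisymm (le_trans (measure_mono Set.inter_subset_left) hN₂0.le) zero_le
  set G : ℝ × ℝ → ℝ≥0∞ := fun p =>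
    ENNReal.ofReal |(Real.sin p.1 + Real.cos p.2) / Real.sin p.2 ^ 3| with hGdef
  have hGmeas : Measurable fun p => G p * N₂.indicator 1 (fmap p) := by
    apply Measurable.mul
    · exact ENNReal.measurable_ofReal.comp
        ((((Real.continuous_sin.comp continuous_fst).add
          (Real.continuous_cos.comp continuous_snd)).measurable.div
          ((Real.continuous_sin.comp continuous_snd).measurable.pow_const 3)).abs)
    · exact (measurable_one.indicator hN₂).comp measurable_fmap
  have h0' : ∫⁻ p in Sreg, G p * N₂.indicator 1 (fmap p) = 0 := by
    rw [setLIntegral_congr_fun hs (fun p hp => ?_)]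
    · exact h0
    · rw [hGdef]
      simp only
      rw [← fder_det p (Real.sin_pos_of_pos_of_lt_pi hp.2.1.1 hp.2.1.2).ne']
  have hae' : ∀ᵐ p : ℝ × ℝ ∂volume, p ∈ Sreg → G p * N₂.indicator 1 (fmap p) = 0 :=
    (setLIntegral_eq_zero_iff hs hGmeas).1 h0'
  rw [← nonpos_iff_eq_zero]
  refine le_trans (measure_mono ?_) (le_of_eq (ae_iff.1 hae'))
  rintro p ⟨hp, hpN⟩
  simp only [Set.mem_setOf_eq, not_forall]
  refine ⟨hp, ?_⟩
  rw [Set.indicator_of_mem ((hmem p).2 hpN)]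
  simp only [Pi.one_apply, mul_one, hGdef]
  have hnum : Real.sin p.1 + Real.cos p.2 ≠ 0 := hp.2.2
  have hden : Real.sin p.2 ≠ 0 := (Real.sin_pos_of_pos_of_lt_pi hp.2.1.1 hp.2.1.2).ne'
  have : |(Real.sin p.1 + Real.cos p.2) / Real.sin p.2 ^ 3| > 0 :=
    abs_pos.2 (div_ne_zero hnum (pow_ne_zero _ hden))
  simp only [ne_eq, ENNReal.ofReal_eq_zero, not_le]
  exact this

/- === the elementary measure estimate === -/

lemma cos_small_subset {r : ℝ} (hr : 0 ≤ r) :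
    {t : ℝ | |Real.cos t| ≤ r} ∩ Set.Ioc (-π) π ⊆
      Set.Icc (-(π/2) - π/2*r) (-(π/2) + π/2*r) ∪ Set.Icc (π/2 - π/2*r) (π/2 + π/2*r) := by
  rintro t ⟨hc, ht⟩
  have hpi := Real.pi_pos
  have habs : |t| ≤ π := abs_le.2 ⟨(ht.1).le, ht.2⟩
  have habs0 : 0 ≤ |t| := abs_nonneg t
  have hd2 : |(|t| - π/2)| ≤ π/2 := by
    rw [abs_le]; constructor <;> linarith
  have hd0 : 0 ≤ |(|t| - π/2)| := abs_nonneg _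
  have hsin : Real.sin |(|t| - π/2)| = |Real.cos t| := by
    rcases le_or_gt (π/2) |t| with h | h
    · have h2 : Real.cos t ≤ 0 := by
        have := Real.cos_nonpos_of_pi_div_two_le_of_le h (by linarith)
        rwa [Real.cos_abs] at this
      rw [abs_of_nonneg (by linarith), Real.sin_sub, Real.cos_pi_div_two,
        Real.sin_pi_div_two, Real.cos_abs, abs_of_nonpos h2]
      ring
    · have h' := abs_lt.1 h
      rw [abs_of_nonpos (by linarith), neg_sub, Real.sin_pi_div_two_sub, Real.cos_abs,
        abs_of_nonneg (Real.cos_nonneg_of_mem_Icc ⟨by linarith [h'.1], by linarith [h'.2]⟩)]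
  have hj := Real.mul_le_sin hd0 hd2
  rw [hsin] at hj
  have hd : |(|t| - π/2)| ≤ π/2 * r := by
    have hc' : 2 / π * |(|t| - π/2)| ≤ r := le_trans hj hc
    have h2 := mul_le_mul_of_nonneg_left hc' (by positivity : (0:ℝ) ≤ π/2)
    calc |(|t| - π/2)| = π/2 * (2/π * |(|t| - π/2)|) := by
          field_simp
    _ ≤ π/2 * r := h2
  rw [abs_le] at hd
  rcases le_or_gt 0 t with h | h
  · right
    rw [abs_of_nonneg h] at hd
    exact ⟨by linarith [hd.1], by linarith [hd.2]⟩
  · left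
    rw [abs_of_neg h] at hd
    exact ⟨by linarith [hd.2], by linarith [hd.1]⟩

lemma meas_cos_le {r : ℝ} (hr : 0 ≤ r) :
    volume ({t : ℝ | |Real.cos t| ≤ r} ∩ Set.Ioc (-π) π) ≤ ENNReal.ofReal (2 * π * r) := by
  refine le_trans (measure_mono (cos_small_subset hr)) ?_
  refine le_trans (measure_union_le _ _) ?_
  rw [Real.volume_Icc, Real.volume_Icc]
  rw [← ENNReal.ofReal_add (by nlinarith [Real.pi_pos]) (by nlinarith [Real.pi_pos])]
  apply ENNReal.ofReal_le_ofReal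
  nlinarith [Real.pi_pos]

end CotUmapAux

open CotUmapAux Real Set
open scoped ENNReal

/-- For `g : ℂ → ℝ` bounded, measurable, with bounded essential support, the integral
`(1/2π)∫_{U∪L} |cot θ|·|g(u(t,θ))| dt dθ` exists and is finite, where
`U∪L = {(t,θ) ∈ (-π,π]×(0,π) : sin t + cos θ ≠ 0}`. -/
theorem integrableOn_cot_mul_comp_umap
    (g : ℂ → ℝ) (hmeas : Measurable g)
    (hbdd : ∃ M : ℝ, ∀ u : ℂ, |g u| ≤ M)
    (hsupp : ∃ R : ℝ, ∀ᵐ u : ℂ ∂volume, R < ‖u‖ → g u = 0) :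
    IntegrableOn (fun p : ℝ × ℝ => (1 / (2 * Real.pi)) * (|Real.cot p.2| * |g (umap p)|))
      {p ∈ Kcyl | Real.sin p.1 + Real.cos p.2 ≠ 0} volume := by
  classical
  obtain ⟨M, hM⟩ := hbdd
  obtain ⟨R, hR⟩ := hsupp
  have hpi := Real.pi_pos
  set R' := max R 0 with hR'def
  have hR'0 : (0:ℝ) ≤ R' := le_max_right _ _
  have hM0 : (0:ℝ) ≤ M := le_trans (abs_nonneg _) (hM 0)
  set S := {p ∈ Kcyl | Real.sin p.1 + Real.cos p.2 ≠ 0} with hSdef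
  have hKmeas : MeasurableSet Kcyl := measurableSet_Ioc.prod measurableSet_Ioo
  have hCond : MeasurableSet {p : ℝ × ℝ | Real.sin p.1 + Real.cos p.2 ≠ 0} :=
    (isOpen_compl_singleton.preimage
      ((Real.continuous_sin.comp continuous_fst).add
        (Real.continuous_cos.comp continuous_snd))).measurableSet
  have hSmeas : MeasurableSet S := hKmeas.inter hCond
  have hFmeas : Measurable fun p : ℝ × ℝ => 1/(2*π) * (|Real.cot p.2| * |g (umap p)|) :=
    (measurable_cot_snd.abs.mul ((hmeas.comp measurable_umap).abs)).const_mul _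
  -- the essential support null set
  set N : Set ℂ := {u | R' < ‖u‖ ∧ g u ≠ 0} with hNdef
  have hNmeas : MeasurableSet N := by
    refine MeasurableSet.inter ?_ ?_
    · exact measurableSet_lt measurable_const continuous_norm.measurable
    · exact (hmeas (measurableSet_singleton 0)).compl
  have hN0 : volume N = 0 := by
    refine measure_mono_null ?_ (ae_iff.1 hR)
    rintro u ⟨hu1, hu2⟩
    simp only [Set.mem_setOf_eq, Classical.not_imp]
    exact ⟨lt_of_le_of_lt (le_max_left R 0) hu1, hu2⟩
  have hnull := null_preimage N hNmeas hN0
  have hline : volume ({(π:ℝ)} ×ˢ (Set.univ : Set ℝ)) = 0 := by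
    rw [Measure.volume_eq_prod, Measure.prod_prod, Real.volume_singleton, zero_mul]
  have haeB : ∀ᵐ p : ℝ × ℝ ∂volume,
      p ∉ ({p ∈ Sreg | umap p ∈ N} ∪ ({(π:ℝ)} ×ˢ (Set.univ : Set ℝ))) := by
    rw [ae_iff]
    simp only [not_not]
    exact measure_union_null hnull hline
  -- the bounding function
  set T : Set (ℝ × ℝ) := {p | |Real.cos p.1| ≤ R' * Real.sin p.2} with hTdef
  have hTmeas : MeasurableSet T :=
    measurableSet_le (Real.measurable_cos.comp measurable_fst).abs
      ((Real.measurable_sin.comp measurable_snd).const_mul R')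
  set Bnd : ℝ × ℝ → ℝ≥0∞ := fun p =>
    T.indicator (fun q => ENNReal.ofReal (1/(2*π) * M * |Real.cot q.2|)) p with hBnddef
  have hBndmeas : Measurable Bnd :=
    (ENNReal.measurable_ofReal.comp (measurable_cot_snd.abs.const_mul _)).indicator hTmeas
  refine ⟨hFmeas.aestronglyMeasurable, ?_⟩
  show (∫⁻ p in S, ‖1/(2*π) * (|Real.cot p.2| * |g (umap p)|)‖₊ ∂volume) < ⊤
  have step1 : (∫⁻ p in S, ‖1/(2*π) * (|Real.cot p.2| * |g (umap p)|)‖₊ ∂volume)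
      ≤ ∫⁻ p in S, Bnd p ∂volume := by
    refine lintegral_mono_ae ((ae_restrict_iff' hSmeas).2 ?_)
    filter_upwards [haeB] with p hpB hpS
    obtain ⟨⟨ht, hθ⟩, hcond⟩ := hpS
    have hsθ : 0 < Real.sin p.2 := Real.sin_pos_of_pos_of_lt_pi hθ.1 hθ.2
    rw [Set.mem_union, not_or] at hpB
    obtain ⟨hB1, hB2⟩ := hpB
    have hne : p.1 ≠ π := by
      intro h
      exact hB2 (Set.mem_prod.2 ⟨by simp [h], Set.mem_univ _⟩)
    have hp1lt : p.1 < π := lt_of_le_of_ne ht.2 hne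
    have hpSreg : p ∈ Sreg := ⟨⟨ht.1, hp1lt⟩, hθ, hcond⟩
    have hUN : umap p ∉ N := fun h => hB1 ⟨hpSreg, h⟩
    by_cases hg : g (umap p) = 0
    · simp only [hg, abs_zero, mul_zero]
      simp
    · have habsu : ‖umap p‖ ≤ R' := by
        by_contra hlt
        push_neg at hlt
        exact hUN ⟨hlt, hg⟩
      have hre : |Real.cos p.1| ≤ R' * Real.sin p.2 := by
        have h1 := Complex.abs_re_le_norm (umap p)
        rw [umap_re, abs_div, abs_of_pos hsθ] at h1
        have h2 := (div_le_iff₀ hsθ).1 (le_trans h1 habsu)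
        linarith
      have hmemT : p ∈ T := hre
      rw [hBnddef]
      simp only
      rw [Set.indicator_of_mem hmemT]
      have hnn : (0:ℝ) ≤ 1/(2*π) * (|Real.cot p.2| * |g (umap p)|) := by positivity
      rw [← enorm_eq_nnnorm, Real.enorm_eq_ofReal hnn]
      apply ENNReal.ofReal_le_ofReal
      have h3 : |Real.cot p.2| * |g (umap p)| ≤ |Real.cot p.2| * M :=
        mul_le_mul_of_nonneg_left (hM _) (abs_nonneg _)
      have h4 : (0:ℝ) < 1/(2*π) := by positivity
      nlinarith [h3, h4]
  have step2 : (∫⁻ p in S, Bnd p ∂volume) ≤ ∫⁻ p in Kcyl, Bnd p ∂volume :=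
    lintegral_mono' (Measure.restrict_mono (Set.sep_subset _ _) le_rfl) le_rfl
  have step3 : (∫⁻ p in Kcyl, Bnd p ∂volume)
      = ∫⁻ θ in Set.Ioo (0:ℝ) π, ∫⁻ t in Set.Ioc (-π) π, Bnd (t, θ) ∂volume ∂volume := by
    show (∫⁻ p in Set.Ioc (-π) π ×ˢ Set.Ioo (0:ℝ) π, Bnd p ∂volume) = _
    rw [Measure.volume_eq_prod, ← Measure.prod_restrict]
    exact lintegral_prod_symm Bnd hBndmeas.aemeasurable
  have inner : ∀ θ ∈ Set.Ioo (0:ℝ) π,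
      (∫⁻ t in Set.Ioc (-π) π, Bnd (t, θ) ∂volume) ≤ ENNReal.ofReal (M * R') := by
    intro θ hθ
    have hsθ : 0 < Real.sin θ := Real.sin_pos_of_pos_of_lt_pi hθ.1 hθ.2
    have hTθ : MeasurableSet {t : ℝ | |Real.cos t| ≤ R' * Real.sin θ} :=
      measurableSet_le Real.measurable_cos.abs measurable_const
    have hBt : ∀ t : ℝ, Bnd (t, θ) = Set.indicator {t : ℝ | |Real.cos t| ≤ R' * Real.sin θ}
        (fun _ => ENNReal.ofReal (1/(2*π) * M * |Real.cot θ|)) t := by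
      intro t
      by_cases h : |Real.cos t| ≤ R' * Real.sin θ
      · rw [hBnddef]
        simp only
        rw [Set.indicator_of_mem (show ((t,θ) : ℝ × ℝ) ∈ T from h),
          Set.indicator_of_mem (show t ∈ {t : ℝ | |Real.cos t| ≤ R' * Real.sin θ} from h)]
      · rw [hBnddef]
        simp only
        rw [Set.indicator_of_notMem (show ((t,θ) : ℝ × ℝ) ∉ T from h),
          Set.indicator_of_notMem (show t ∉ {t : ℝ | |Real.cos t| ≤ R' * Real.sin θ} from h)]
    calc (∫⁻ t in Set.Ioc (-π) π, Bnd (t, θ) ∂volume)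
        = ∫⁻ t in Set.Ioc (-π) π, Set.indicator {t : ℝ | |Real.cos t| ≤ R' * Real.sin θ}
            (fun _ => ENNReal.ofReal (1/(2*π) * M * |Real.cot θ|)) t ∂volume :=
          lintegral_congr fun t => hBt t
      _ = ENNReal.ofReal (1/(2*π) * M * |Real.cot θ|)
            * volume ({t : ℝ | |Real.cos t| ≤ R' * Real.sin θ} ∩ Set.Ioc (-π) π) := by
          rw [lintegral_indicator hTθ, setLIntegral_const, Measure.restrict_apply hTθ]
      _ ≤ ENNReal.ofReal (1/(2*π) * M * |Real.cot θ|)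
            * ENNReal.ofReal (2*π*(R' * Real.sin θ)) :=
          mul_le_mul_right (meas_cos_le (by positivity)) _
      _ = ENNReal.ofReal ((1/(2*π) * M * |Real.cot θ|) * (2*π*(R' * Real.sin θ))) := by
          rw [← ENNReal.ofReal_mul (by positivity)]
      _ ≤ ENNReal.ofReal (M * R') := by
          apply ENNReal.ofReal_le_ofReal
          have hcot : |Real.cot θ| * Real.sin θ = |Real.cos θ| := by
            rw [Real.cot_eq_cos_div_sin, abs_div, abs_of_pos hsθ, div_mul_cancel₀]
            exact hsθ.ne'
          have hb : |Real.cos θ| ≤ 1 := Real.abs_cos_le_one θ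
          have hexp : (1/(2*π) * M * |Real.cot θ|) * (2*π*(R' * Real.sin θ))
              = M * R' * (|Real.cot θ| * Real.sin θ) := by
            field_simp
          rw [hexp, hcot]
          nlinarith [hb, mul_nonneg hM0 hR'0]
  have outer : (∫⁻ θ in Set.Ioo (0:ℝ) π, ∫⁻ t in Set.Ioc (-π) π, Bnd (t, θ) ∂volume ∂volume)
      ≤ ∫⁻ _ in Set.Ioo (0:ℝ) π, ENNReal.ofReal (M * R') ∂volume :=
    setLIntegral_mono' measurableSet_Ioo inner
  have final : (∫⁻ p in S, ‖1/(2*π) * (|Real.cot p.2| * |g (umap p)|)‖₊ ∂volume)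
      ≤ ENNReal.ofReal (M * R') * volume (Set.Ioo (0:ℝ) π) := by
    refine le_trans step1 (le_trans step2 ?_)
    rw [step3, ← setLIntegral_const]
    exact outer
  refine lt_of_le_of_lt final ?_
  rw [Real.volume_Ioo]
  exact ENNReal.mul_lt_top ENNReal.ofReal_lt_top ENNReal.ofReal_lt_top
end

section
/- For every bounded measurable g : ℂ → ℝ with compact essential support, I_g = (1/2π)∫_U (−cot θ + i)·g(u(t,θ)) dt dθ + (1/2π)∫_L (cot θ − i)·g(u(t,θ)) dt dθ, where I_g = −(1/π)∫_ℂ g(u)/(conj(u+1)·(u−1)) da(u). -/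
open MeasureTheory Set
open scoped Real

namespace IgAux

noncomputable def phi (p : ℝ × ℝ) : ℝ × ℝ :=
  (Real.cos p.1 * (Real.sin p.2)⁻¹, (Real.sin p.1 + Real.cos p.2) * (Real.sin p.2)⁻¹)

noncomputable def fder (p : ℝ × ℝ) : ℝ × ℝ →L[ℝ] ℝ × ℝ :=
  LinearMap.toContinuousLinearMap (Matrix.toLin (Module.Basis.finTwoProd ℝ) (Module.Basis.finTwoProd ℝ)
    !![-Real.sin p.1 * (Real.sin p.2)⁻¹,
       Real.cos p.1 * (-Real.cos p.2 / (Real.sin p.2) ^ 2);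
       Real.cos p.1 * (Real.sin p.2)⁻¹,
       (Real.sin p.1 + Real.cos p.2) * (-Real.cos p.2 / (Real.sin p.2) ^ 2) +
         Real.sin p.2 * -(Real.sin p.2)⁻¹ ])

lemma hasFDerivAt_phi {p : ℝ × ℝ} (hs : Real.sin p.2 ≠ 0) :
    HasFDerivAt phi (fder p) p := by
  unfold phi fder
  rw [Matrix.toLin_finTwoProd_toContinuousLinearMap]
  have hinv : HasDerivAt (fun θ : ℝ => (Real.sin θ)⁻¹)
      (-Real.cos p.2 / (Real.sin p.2) ^ 2) p.2 := by
    exact (Real.hasDerivAt_sin p.2).inv hs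
  convert! HasFDerivAt.prodMk (𝕜 := ℝ)
    (((Real.hasDerivAt_cos p.1).comp_hasFDerivAt p hasFDerivAt_fst).mul
      (hinv.comp_hasFDerivAt p hasFDerivAt_snd))
    ((((Real.hasDerivAt_sin p.1).comp_hasFDerivAt p hasFDerivAt_fst).add
        ((Real.hasDerivAt_cos p.2).comp_hasFDerivAt p hasFDerivAt_snd)).mul
      (hinv.comp_hasFDerivAt p hasFDerivAt_snd)) using 2 <;>
    simp [smul_smul, add_comm, neg_mul, smul_neg, smul_add,
      neg_smul _ (ContinuousLinearMap.snd ℝ ℝ ℝ)] <;> ring_nf <;> module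

lemma det_fder {p : ℝ × ℝ} (hs : Real.sin p.2 ≠ 0) :
    (fder p).det = (Real.sin p.1 + Real.cos p.2) / (Real.sin p.2) ^ 3 := by
  unfold fder
  simp only [LinearMap.det_toContinuousLinearMap, LinearMap.det_toLin, Matrix.det_fin_two_of]
  have h := Real.sin_sq_add_cos_sq p.1
  field_simp
  linear_combination (Real.cos p.2) * h +
    (Real.sin p.1) * Real.sin_sq_add_cos_sq p.2


lemma umap_eq (p : ℝ × ℝ) :
    umap p = ((phi p).1 : ℂ) + ((phi p).2 : ℂ) * Complex.I := by
  simp only [umap, phi, mul_comm Complex.I, Complex.exp_mul_I, Real.cot_eq_cos_div_sin]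
  push_cast
  simp [Complex.ext_iff, Complex.cos_ofReal_re, div_eq_mul_inv]
  constructor <;> ring

lemma denom_eq {p : ℝ × ℝ} (hs : Real.sin p.2 ≠ 0) :
    (starRingEnd ℂ) (umap p + 1) * (umap p - 1) =
      ((2 * (Real.sin p.1 + Real.cos p.2) / (Real.sin p.2) ^ 2 : ℝ) : ℂ) *
        ((Real.cos p.2 : ℂ) + (Real.sin p.2 : ℂ) * Complex.I) := by
  rw [umap_eq]
  simp only [phi]
  simp only [Complex.ext_iff, Complex.mul_re, Complex.mul_im, Complex.add_re, Complex.add_im,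
    Complex.sub_re, Complex.sub_im, Complex.one_re, Complex.one_im, Complex.I_re, Complex.I_im,
    Complex.conj_re, Complex.conj_im, Complex.ofReal_re, Complex.ofReal_im, map_add, map_mul,
    Complex.conj_I, Complex.conj_ofReal, map_one, Complex.neg_re, Complex.neg_im]
  constructor
  · field_simp
    linear_combination Real.sin_sq_add_cos_sq p.1 - Real.sin_sq_add_cos_sq p.2
  · field_simp
    ring_nf

lemma null_horiz : volume {q : ℝ × ℝ | q.2 = 0} = 0 := by
  have : {q : ℝ × ℝ | q.2 = 0} = (univ : Set ℝ) ×ˢ ({0} : Set ℝ) := by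
    ext q
    simp only [mem_setOf_eq, Set.mem_prod, mem_univ, mem_singleton_iff, true_and]
  rw [this, Measure.volume_eq_prod, Measure.prod_prod]
  simp

lemma null_hyper : volume {q : ℝ × ℝ | q.1 = -Real.sqrt (1 + q.2 ^ 2)} = 0 := by
  have hsub : {q : ℝ × ℝ | q.1 = -Real.sqrt (1 + q.2 ^ 2)} ⊆
      {q : ℝ × ℝ | q.1 ^ 2 = 1 + q.2 ^ 2} := by
    rintro ⟨x, y⟩ hq
    simp only [mem_setOf_eq] at hq ⊢
    rw [hq, neg_pow]
    rw [Real.sq_sqrt (by positivity)]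
    ring
  refine measure_mono_null hsub ?_
  have hm : MeasurableSet {q : ℝ × ℝ | q.1 ^ 2 = 1 + q.2 ^ 2} := by
    have : IsClosed {q : ℝ × ℝ | q.1 ^ 2 = 1 + q.2 ^ 2} :=
      isClosed_eq (by fun_prop) (by fun_prop)
    exact this.measurableSet
  rw [Measure.volume_eq_prod, Measure.prod_apply hm]
  have : ∀ x : ℝ, volume (Prod.mk x ⁻¹' {q : ℝ × ℝ | q.1 ^ 2 = 1 + q.2 ^ 2}) = 0 := by
    intro x
    have hsub2 : (Prod.mk x ⁻¹' {q : ℝ × ℝ | q.1 ^ 2 = 1 + q.2 ^ 2}) ⊆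
        {Real.sqrt (x ^ 2 - 1), -Real.sqrt (x ^ 2 - 1)} := by
      intro y hy
      simp only [mem_preimage, mem_setOf_eq] at hy
      have h1 : y ^ 2 = x ^ 2 - 1 := by linarith
      have h2 : (0:ℝ) ≤ x ^ 2 - 1 := h1 ▸ sq_nonneg y
      have h3 : y ^ 2 = Real.sqrt (x ^ 2 - 1) ^ 2 := by rw [Real.sq_sqrt h2]; exact h1
      have := sq_eq_sq_iff_eq_or_eq_neg.mp h3
      simpa [mem_insert_iff, mem_singleton_iff] using this
    refine measure_mono_null hsub2 ?_
    exact measure_union_null (measure_singleton _) (measure_singleton _)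
  simp only [this]
  simp

lemma integral_complex_eq {E : Type*} [NormedAddCommGroup E] [NormedSpace ℝ E] (f : ℂ → E) :
    (∫ q : ℝ × ℝ, f (↑q.1 + ↑q.2 * Complex.I)) = ∫ u : ℂ, f u := by
  rw [← (Complex.volume_preserving_equiv_real_prod.symm).integral_comp
    Complex.measurableEquivRealProd.symm.measurableEmbedding]
  congr 1; ext q
  simp [Complex.measurableEquivRealProd_symm_apply, Complex.mk_eq_add_mul_I]

lemma integrable_complex_iff {E : Type*} [NormedAddCommGroup E] (f : ℂ → E) :
    (Integrable fun q : ℝ × ℝ => f (↑q.1 + ↑q.2 * Complex.I)) ↔ Integrable f := by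
  rw [← MeasurePreserving.integrable_comp_emb
    (Complex.volume_preserving_equiv_real_prod.symm)
    Complex.measurableEquivRealProd.symm.measurableEmbedding]
  constructor <;> intro h <;> [skip; skip] <;>
    · apply h.congr
      filter_upwards with q
      simp [Function.comp, Complex.measurableEquivRealProd_symm_apply,
        Complex.mk_eq_add_mul_I]

lemma injOn_phi : InjOn phi {p : ℝ × ℝ | p.1 ∈ Ioc (-π) π ∧ p.2 ∈ Ioo 0 π ∧
    Real.sin p.1 + Real.cos p.2 ≠ 0} := by
  rintro ⟨t, θ⟩ ⟨ht, hθ, hD⟩ ⟨t', θ'⟩ ⟨ht', hθ', hD'⟩ h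
  simp only [phi, Prod.mk.injEq] at h
  obtain ⟨h1, h2⟩ := h
  have hs : 0 < Real.sin θ := Real.sin_pos_of_pos_of_lt_pi hθ.1 hθ.2
  have hs' : 0 < Real.sin θ' := Real.sin_pos_of_pos_of_lt_pi hθ'.1 hθ'.2
  set A := Real.cos t with hA_def
  set A' := Real.cos t' with hA'_def
  set B := Real.sin t + Real.cos θ with hB_def
  set B' := Real.sin t' + Real.cos θ' with hB'_def
  set c := Real.cos θ
  set c' := Real.cos θ'
  set s := Real.sin θ
  set s' := Real.sin θ'
  have hA : A * s' = A' * s := by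
    field_simp at h1; linarith [h1]
  have hB : B * s' = B' * s := by
    field_simp at h2; linarith [h2]
  have hss : s ^ 2 + c ^ 2 = 1 := Real.sin_sq_add_cos_sq θ
  have hss' : s' ^ 2 + c' ^ 2 = 1 := Real.sin_sq_add_cos_sq θ'
  have e1 : A ^ 2 + (B - c) ^ 2 = 1 := by
    simpa [hA_def, hB_def] using
      (by rw [add_comm]; exact Real.sin_sq_add_cos_sq t : Real.cos t ^ 2 + Real.sin t ^ 2 = 1)
  have e2 : A' ^ 2 + (B' - c') ^ 2 = 1 := by
    simpa [hA'_def, hB'_def] using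
      (by rw [add_comm]; exact Real.sin_sq_add_cos_sq t' : Real.cos t' ^ 2 + Real.sin t' ^ 2 = 1)
  have h3 : (A * s') ^ 2 + (B * s') ^ 2 = (A' * s) ^ 2 + (B' * s) ^ 2 := by
    rw [hA, hB]
  have e1' : A ^ 2 + B ^ 2 = s ^ 2 + 2 * B * c := by linear_combination e1 - hss
  have e2' : A' ^ 2 + B' ^ 2 = s' ^ 2 + 2 * B' * c' := by linear_combination e2 - hss'
  have h4 : B * s' * (c * s' - c' * s) = 0 := by
    linear_combination h3 / 2 - (s' ^ 2 / 2) * e1' + (s ^ 2 / 2) * e2' - (c' * s) * hB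
  have hBne : B ≠ 0 := hD
  have key : c * s' = c' * s := by
    have := mul_eq_zero.mp h4
    rcases this with h5 | h5
    · rcases mul_eq_zero.mp h5 with h6 | h6
      · exact absurd h6 hBne
      · exact absurd h6 hs'.ne'
    · linarith
  have hc2 : c ^ 2 = c' ^ 2 := by
    linear_combination (c * s' + c' * s) * key - c ^ 2 * hss' + c' ^ 2 * hss
  have hc : c = c' := by
    rcases sq_eq_sq_iff_eq_or_eq_neg.mp hc2 with h5 | h5
    · exact h5
    · have : c * (s' + s) = 0 := by linear_combination key + s * h5
      rcases mul_eq_zero.mp this with h6 | h6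
      · linarith
      · linarith
  have hθθ : θ = θ' :=
    Real.injOn_cos ⟨hθ.1.le, hθ.2.le⟩ ⟨hθ'.1.le, hθ'.2.le⟩ hc
  subst hθθ
  have hsseq : s = s' := rfl
  have hAA : A = A' := by
    have := hA; rw [← hsseq] at this
    exact mul_right_cancel₀ hs.ne' this
  have hBB : B = B' := by
    have := hB; rw [← hsseq] at this
    exact mul_right_cancel₀ hs.ne' this
  have hsin : Real.sin t = Real.sin t' := by
    have : Real.sin t + c = Real.sin t' + c := by rw [hB_def] at hBB; rw [hBB]
    linarith
  have htt : t = t' := by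
    have e3 : Complex.arg (Complex.cos t + Complex.sin t * Complex.I) = t :=
      Complex.arg_cos_add_sin_mul_I ht
    have e4 : Complex.arg (Complex.cos t' + Complex.sin t' * Complex.I) = t' :=
      Complex.arg_cos_add_sin_mul_I ht'
    have hcc : (Complex.cos (t : ℂ)) = Complex.cos (t' : ℂ) := by
      rw [← Complex.ofReal_cos, ← Complex.ofReal_cos]; exact_mod_cast hAA
    have hss2 : (Complex.sin (t : ℂ)) = Complex.sin (t' : ℂ) := by
      rw [← Complex.ofReal_sin, ← Complex.ofReal_sin]; exact_mod_cast hsin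
    rw [← e3, ← e4, hcc, hss2]
  rw [htt]

lemma phi_surj {q : ℝ × ℝ} (hy : q.2 ≠ 0) (hx : q.1 ≠ -Real.sqrt (1 + q.2 ^ 2)) :
    ∃ p : ℝ × ℝ, p.1 ∈ Ioo (-π) π ∧ p.2 ∈ Ioo 0 π ∧
      Real.sin p.1 + Real.cos p.2 = q.2 * Real.sin p.2 ∧ phi p = q := by
  obtain ⟨x, y⟩ := q
  simp only at hy hx ⊢
  set c : ℝ := (x ^ 2 + y ^ 2 - 1) / (2 * y) with hc_def
  set θ : ℝ := π / 2 - Real.arctan c with hθ_def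
  have hθmem : θ ∈ Ioo 0 π := by
    constructor
    · have := Real.arctan_lt_pi_div_two c; simp only [hθ_def]; linarith
    · have := Real.neg_pi_div_two_lt_arctan c; simp only [hθ_def]; linarith
  set σ : ℝ := Real.sqrt (1 + c ^ 2) with hσ_def
  have hσ : 0 < σ := Real.sqrt_pos.mpr (by positivity)
  have hσ2 : σ ^ 2 = 1 + c ^ 2 := Real.sq_sqrt (by positivity)
  have hsinθ : Real.sin θ = 1 / σ := by
    rw [hθ_def, Real.sin_pi_div_two_sub, Real.cos_arctan]
  have hcosθ : Real.cos θ = c / σ := by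
    rw [hθ_def, Real.cos_pi_div_two_sub, Real.sin_arctan]
  have hc2 : 2 * y * c = x ^ 2 + y ^ 2 - 1 := by
    rw [hc_def]; field_simp
  clear_value c θ σ
  clear hc_def hθ_def hσ_def
  set X : ℝ := x * Real.sin θ with hX_def
  set Y : ℝ := y * Real.sin θ - Real.cos θ with hY_def
  have hXY : X ^ 2 + Y ^ 2 = 1 := by
    rw [hX_def, hY_def, hsinθ, hcosθ]
    have hσne : σ ≠ 0 := hσ.ne'
    field_simp
    linear_combination -hσ2 - hc2
  set z : ℂ := (X : ℂ) + (Y : ℂ) * Complex.I with hz_def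
  have habs : ‖z‖ = 1 := by
    rw [hz_def, Complex.norm_def, Complex.normSq_add_mul_I, hXY, Real.sqrt_one]
  have hzne : z ≠ 0 := by
    intro h; rw [h] at habs; simp at habs
  set t : ℝ := Complex.arg z with ht_def
  have hcost : Real.cos t = X := by
    rw [ht_def, Complex.cos_arg hzne, habs]
    simp [hz_def]
  have hsint : Real.sin t = Y := by
    rw [ht_def, Complex.sin_arg, habs]
    simp [hz_def]
  have htmem : t ∈ Ioc (-π) π := ⟨Complex.neg_pi_lt_arg z, Complex.arg_le_pi z⟩
  have hsθ : Real.sin θ ≠ 0 := by rw [hsinθ]; positivity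
  have htne : t ≠ π := by
    intro h
    have h1 : X = -1 := by rw [← hcost, h, Real.cos_pi]
    have h2 : Y = 0 := by rw [← hsint, h, Real.sin_pi]
    have h3 : y = c := by
      have : y * Real.sin θ = Real.cos θ := by rw [hY_def] at h2; linarith
      rw [hsinθ, hcosθ] at this
      field_simp at this
      exact this
    apply hx
    have h4 : x * Real.sin θ = -1 := by rw [← hX_def, h1]
    rw [hsinθ] at h4
    have h5 : x = -σ := by field_simp at h4; linarith
    rw [h5, h3]
    congr 1
    rw [← hσ2, Real.sqrt_sq hσ.le]
  refine ⟨(t, θ), ⟨htmem.1, lt_of_le_of_ne htmem.2 htne⟩, hθmem, ?_, ?_⟩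
  · rw [hsint, hY_def]; ring
  · simp only [phi]
    rw [hcost, hsint, hX_def, hY_def, Prod.mk.injEq]
    constructor
    · field_simp
    · field_simp; ring

lemma hdet_polar (p : ℝ × ℝ) :
    (LinearMap.toContinuousLinearMap (Matrix.toLin (Module.Basis.finTwoProd ℝ) (Module.Basis.finTwoProd ℝ)
      !![Real.cos p.2, -p.1 * Real.sin p.2; Real.sin p.2, p.1 * Real.cos p.2])).det = p.1 := by
  conv_rhs => rw [← one_mul p.1, ← Real.cos_sq_add_sin_sq p.2]
  simp only [neg_mul, LinearMap.det_toContinuousLinearMap, LinearMap.det_toLin,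
    Matrix.det_fin_two_of, sub_neg_eq_add]
  ring

lemma integrableOn_inv_abs_ball :
    IntegrableOn (fun u : ℂ => (‖u‖)⁻¹) (Metric.ball 0 1) volume := by
  rw [← integrable_indicator_iff Metric.isOpen_ball.measurableSet]
  rw [← integrable_complex_iff]
  set D : Set (ℝ × ℝ) := {q | q.1 ^ 2 + q.2 ^ 2 < 1} with hD_def
  have hDmeas : MeasurableSet D :=
    (isOpen_lt (by fun_prop) continuous_const).measurableSet
  set H : ℝ × ℝ → ℝ := fun q => (Real.sqrt (q.1 ^ 2 + q.2 ^ 2))⁻¹ with hH_def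
  have heq : (fun q : ℝ × ℝ =>
      (Metric.ball (0:ℂ) 1).indicator (fun u => (‖u‖)⁻¹) (↑q.1 + ↑q.2 * Complex.I))
      = D.indicator H := by
    ext q
    have habs : ‖↑q.1 + ↑q.2 * Complex.I‖ = Real.sqrt (q.1 ^ 2 + q.2 ^ 2) := by
      rw [Complex.norm_def, Complex.normSq_add_mul_I]
    have hmem : (↑q.1 + ↑q.2 * Complex.I) ∈ Metric.ball (0:ℂ) 1 ↔ q ∈ D := by
      rw [Metric.mem_ball, dist_zero_right, habs, hD_def, mem_setOf_eq,
        Real.sqrt_lt' one_pos, one_pow]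
    by_cases h : q ∈ D
    · rw [indicator_of_mem h, indicator_of_mem (hmem.mpr h), habs]
    · rw [indicator_of_notMem h, indicator_of_notMem (fun hc => h (hmem.mp hc))]
  rw [heq, integrable_indicator_iff hDmeas]
  set s : Set (ℝ × ℝ) := Ioo (0:ℝ) 1 ×ˢ Ioo (-π) π with hs_def
  have hsmeas : MeasurableSet s := (isOpen_Ioo.prod isOpen_Ioo).measurableSet
  have him : polarCoord.symm '' s ⊆ D := by
    rintro q ⟨p, hp, rfl⟩
    simp only [polarCoord_symm_apply, hD_def, mem_setOf_eq]
    have h1 : (p.1 * Real.cos p.2) ^ 2 + (p.1 * Real.sin p.2) ^ 2 = p.1 ^ 2 := by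
      have := Real.sin_sq_add_cos_sq p.2; nlinarith
    rw [h1]
    obtain ⟨h2, h3⟩ := (mem_prod.mp hp).1
    nlinarith
  have hcompl : D \ polarCoord.symm '' s ⊆ {q : ℝ × ℝ | q.2 = 0} := by
    rintro q ⟨hqD, hqn⟩
    by_contra hq2
    apply hqn
    have hsrc : q ∈ polarCoord.source := Or.inr hq2
    have htgt := polarCoord.map_source hsrc
    refine ⟨polarCoord q, ?_, polarCoord.left_inv hsrc⟩
    rw [polarCoord_target] at htgt
    obtain ⟨ht1, ht2⟩ := mem_prod.mp htgt
    refine mem_prod.mpr ⟨⟨ht1, ?_⟩, ht2⟩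
    show Real.sqrt (q.1 ^ 2 + q.2 ^ 2) < 1
    rw [Real.sqrt_lt' one_pos, one_pow]
    exact hqD
  have hae : D =ᵐ[volume] polarCoord.symm '' s := by
    rw [Filter.eventuallyEq_set]
    have h0 : volume ({q : ℝ × ℝ | q.2 = 0}) = 0 := null_horiz
    filter_upwards [measure_eq_zero_iff_ae_notMem.mp h0] with q hq
    constructor
    · intro hqD
      by_cases h : q ∈ polarCoord.symm '' s
      · exact h
      · exact absurd (hcompl ⟨hqD, h⟩) hq
    · exact fun h => him h
  refine IntegrableOn.congr_set_ae ?_ hae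
  have hinj : InjOn (⇑polarCoord.symm) s := by
    apply polarCoord.symm.injOn.mono
    rw [OpenPartialHomeomorph.symm_source, polarCoord_target, hs_def]
    exact Set.prod_mono (Ioo_subset_Ioi_self) subset_rfl
  rw [integrableOn_image_iff_integrableOn_abs_det_fderiv_smul volume hsmeas
    (fun p _ => (hasFDerivAt_polarCoord_symm p).hasFDerivWithinAt) hinj]
  have hvol : volume s < ⊤ := by
    rw [hs_def, Measure.volume_eq_prod, Measure.prod_prod]
    exact ENNReal.mul_lt_top measure_Ioo_lt_top measure_Ioo_lt_top
  have hconst : IntegrableOn (fun _ : ℝ × ℝ => (1:ℝ)) s volume :=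
    integrableOn_const hvol.ne
  refine hconst.congr_fun (fun p hp => ?_) hsmeas
  show (1:ℝ) = _
  obtain ⟨hp1, hp2⟩ := mem_prod.mp hp
  have h1 : (p.1 * Real.cos p.2) ^ 2 + (p.1 * Real.sin p.2) ^ 2 = p.1 ^ 2 := by
    have := Real.sin_sq_add_cos_sq p.2; nlinarith
  rw [fderivPolarCoordSymm, hdet_polar p]
  simp only [polarCoord_symm_apply, hH_def]
  rw [h1, Real.sqrt_sq hp1.1.le, smul_eq_mul, abs_of_pos hp1.1, mul_inv_cancel₀ hp1.1.ne']

lemma integrableOn_inv_abs_ball' (a : ℂ) :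
    IntegrableOn (fun u : ℂ => (‖u - a‖)⁻¹) (Metric.ball a 1) volume := by
  have h0 := integrableOn_inv_abs_ball
  rw [← integrable_indicator_iff Metric.isOpen_ball.measurableSet] at h0 ⊢
  have h1 := h0.comp_sub_right a
  refine h1.congr ?_
  filter_upwards with u
  by_cases h : u ∈ Metric.ball a 1
  · have h' : u - a ∈ Metric.ball (0:ℂ) 1 := by
      rw [Metric.mem_ball, dist_zero_right]
      rw [Metric.mem_ball, dist_eq_norm] at h
      exact h
    rw [indicator_of_mem h', indicator_of_mem h]
  · have h' : u - a ∉ Metric.ball (0:ℂ) 1 := by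
      rw [Metric.mem_ball, dist_zero_right]
      rw [Metric.mem_ball, dist_eq_norm] at h
      exact h
    rw [indicator_of_notMem h', indicator_of_notMem h]

lemma integrable_f (g : ℂ → ℝ) (hmeas : Measurable g)
    (hbdd : ∃ M : ℝ, ∀ u : ℂ, |g u| ≤ M)
    (hsupp : ∃ R : ℝ, ∀ᵐ u : ℂ ∂volume, R < ‖u‖ → g u = 0) :
    Integrable (fun u : ℂ => (g u : ℂ) / ((starRingEnd ℂ) (u + 1) * (u - 1))) volume := by
  obtain ⟨M, hM⟩ := hbdd
  obtain ⟨R, hR⟩ := hsupp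
  have hM0 : 0 ≤ M := le_trans (abs_nonneg _) (hM 0)
  set f : ℂ → ℂ := fun u => (g u : ℂ) / ((starRingEnd ℂ) (u + 1) * (u - 1)) with hf_def
  have hfm : AEStronglyMeasurable f volume := by
    apply Measurable.aestronglyMeasurable
    apply Measurable.div
    · exact Complex.measurable_ofReal.comp hmeas
    · exact ((Complex.continuous_conj.comp (continuous_id.add continuous_const)).mul
        (continuous_id.sub continuous_const)).measurable
  set H : ℂ → ℝ := fun u =>
    (Metric.ball (1:ℂ) 1).indicator (fun u => M * (‖u - 1‖)⁻¹) u +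
    (Metric.ball (-1:ℂ) 1).indicator (fun u => M * (‖u + 1‖)⁻¹) u +
    (Metric.closedBall (0:ℂ) |R|).indicator (fun _ => M) u with hH_def
  have hHint : Integrable H volume := by
    refine Integrable.add (Integrable.add ?_ ?_) ?_
    · rw [integrable_indicator_iff Metric.isOpen_ball.measurableSet]
      exact (integrableOn_inv_abs_ball' 1).const_mul M
    · rw [integrable_indicator_iff Metric.isOpen_ball.measurableSet]
      exact IntegrableOn.congr_fun ((integrableOn_inv_abs_ball' (-1)).const_mul M)
        (fun u _ => by rw [sub_neg_eq_add]) Metric.isOpen_ball.measurableSet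
    · rw [integrable_indicator_iff measurableSet_closedBall]
      exact integrableOn_const measure_closedBall_lt_top.ne
  refine Integrable.mono' hHint hfm ?_
  filter_upwards [hR] with u hu
  have hnn1 : 0 ≤ (Metric.ball (1:ℂ) 1).indicator (fun u => M * (‖u - 1‖)⁻¹) u :=
    indicator_nonneg (fun x _ => by positivity) u
  have hnn2 : 0 ≤ (Metric.ball (-1:ℂ) 1).indicator (fun u => M * (‖u + 1‖)⁻¹) u :=
    indicator_nonneg (fun x _ => by positivity) u
  have hnn3 : 0 ≤ (Metric.closedBall (0:ℂ) |R|).indicator (fun _ : ℂ => M) u :=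
    indicator_nonneg (fun x _ => hM0) u
  have hHnn : 0 ≤ H u := by rw [hH_def]; positivity
  have hnorm : ‖f u‖ = |g u| / (‖u + 1‖ * ‖u - 1‖) := by
    rw [hf_def]
    simp only [norm_div, norm_mul, Complex.norm_conj,
      Complex.norm_real, Real.norm_eq_abs]
  by_cases hu1 : u = 1
  · rw [hu1]; simp only [hf_def, sub_self, mul_zero, div_zero, norm_zero]; rw [← hu1]; exact hHnn
  by_cases hu2 : u = -1
  · rw [hu2]
    simp only [hf_def, neg_add_cancel, map_zero, zero_mul, div_zero, norm_zero]
    rw [← hu2]; exact hHnn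
  have hB1 : 0 < ‖u - 1‖ := by
    rw [norm_pos_iff]; exact sub_ne_zero.mpr hu1
  have hB2 : 0 < ‖u + 1‖ := by
    rw [norm_pos_iff]
    intro h; apply hu2; linear_combination h
  by_cases hsup : |R| < ‖u‖
  · have : g u = 0 := hu (lt_of_le_of_lt (le_abs_self R) hsup)
    rw [hnorm, this]
    simpa using hHnn
  push_neg at hsup
  have hu3 : u ∈ Metric.closedBall (0:ℂ) |R| := by
    rw [Metric.mem_closedBall, dist_zero_right]; exact hsup
  by_cases hb1 : u ∈ Metric.ball (1:ℂ) 1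
  · have hA : 1 ≤ ‖u + 1‖ := by
      have h1 : ‖u - 1‖ < 1 := by
        rw [Metric.mem_ball, Complex.dist_eq] at hb1; exact hb1
      have h2 : ‖(2:ℂ)‖ - ‖(1:ℂ) - u‖ ≤ ‖(2:ℂ) - (1 - u)‖ := norm_sub_norm_le _ _
      have he : (2:ℂ) - (1 - u) = u + 1 := by ring
      have h3 : ‖(2:ℂ)‖ = 2 := by norm_num
      rw [he, h3, norm_sub_rev] at h2
      linarith
    have hle : ‖f u‖ ≤ M * (‖u - 1‖)⁻¹ := by
      rw [hnorm, ← div_eq_mul_inv]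
      exact div_le_div₀ hM0 (hM u) hB1 (le_mul_of_one_le_left hB1.le hA)
    calc ‖f u‖ ≤ M * (‖u - 1‖)⁻¹ := hle
      _ = (Metric.ball (1:ℂ) 1).indicator (fun u => M * (‖u - 1‖)⁻¹) u := by
          rw [indicator_of_mem hb1]
      _ ≤ H u := by rw [hH_def]; dsimp only; linarith
  by_cases hb2 : u ∈ Metric.ball (-1:ℂ) 1
  · have hA : 1 ≤ ‖u - 1‖ := by
      have h1 : ‖u + 1‖ < 1 := by
        rw [Metric.mem_ball, Complex.dist_eq] at hb2
        have he : u - -1 = u + 1 := by ring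
        rwa [he] at hb2
      have h2 : ‖(2:ℂ)‖ - ‖(1:ℂ) + u‖ ≤ ‖(2:ℂ) - (1 + u)‖ := norm_sub_norm_le _ _
      have he : (2:ℂ) - (1 + u) = -(u - 1) := by ring
      have he2 : (1:ℂ) + u = u + 1 := add_comm 1 u
      have h3 : ‖(2:ℂ)‖ = 2 := by norm_num
      rw [he, h3, he2, norm_neg] at h2
      linarith
    have hle : ‖f u‖ ≤ M * (‖u + 1‖)⁻¹ := by
      rw [hnorm, ← div_eq_mul_inv]
      refine div_le_div₀ hM0 (hM u) hB2 ?_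
      calc ‖u + 1‖ = 1 * ‖u + 1‖ := (one_mul _).symm
        _ ≤ ‖u - 1‖ * ‖u + 1‖ := by
            exact mul_le_mul_of_nonneg_right hA hB2.le
        _ = ‖u + 1‖ * ‖u - 1‖ := mul_comm _ _
    calc ‖f u‖ ≤ M * (‖u + 1‖)⁻¹ := hle
      _ = (Metric.ball (-1:ℂ) 1).indicator (fun u => M * (‖u + 1‖)⁻¹) u := by
          rw [indicator_of_mem hb2]
      _ ≤ H u := by rw [hH_def]; dsimp only; linarith
  · have hA1 : 1 ≤ ‖u - 1‖ := by
      rw [Metric.mem_ball, Complex.dist_eq] at hb1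
      push_neg at hb1; exact hb1
    have hA2 : 1 ≤ ‖u + 1‖ := by
      rw [Metric.mem_ball, Complex.dist_eq] at hb2
      push_neg at hb2
      have he : u - -1 = u + 1 := by ring
      rwa [he] at hb2
    have hle : ‖f u‖ ≤ M := by
      rw [hnorm]
      calc |g u| / (‖u + 1‖ * ‖u - 1‖) ≤ M / 1 := by
            refine div_le_div₀ hM0 (hM u) one_pos ?_
            nlinarith
        _ = M := div_one M
    calc ‖f u‖ ≤ M := hle
      _ = (Metric.closedBall (0:ℂ) |R|).indicator (fun _ : ℂ => M) u := by
          rw [indicator_of_mem hu3]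
      _ ≤ H u := by rw [hH_def]; dsimp only; linarith

lemma integrand_core {p : ℝ × ℝ} (hs : 0 < Real.sin p.2)
    (hD : Real.sin p.1 + Real.cos p.2 ≠ 0) (G : ℂ) :
    (((Real.sin p.1 + Real.cos p.2) / Real.sin p.2 ^ 3 : ℝ) : ℂ) *
      (G / ((starRingEnd ℂ) (umap p + 1) * (umap p - 1))) =
    (((Real.cot p.2 : ℂ) - Complex.I) / 2) * G := by
  rw [denom_eq hs.ne']
  have h2 : ((Real.cos p.2 : ℂ)) ^ 2 + ((Real.sin p.2 : ℂ)) ^ 2 = 1 := by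
    have : (Real.cos p.2) ^ 2 + (Real.sin p.2) ^ 2 = 1 := by
      linarith [Real.sin_sq_add_cos_sq p.2]
    exact_mod_cast this
  have hI : ((Real.cos p.2 : ℂ) + (Real.sin p.2 : ℂ) * Complex.I) *
      ((Real.cos p.2 : ℂ) - (Real.sin p.2 : ℂ) * Complex.I) = 1 := by
    linear_combination h2 - ((Real.sin p.2 : ℂ)) ^ 2 * Complex.I_sq
  have hcne : ((Real.cos p.2 : ℂ) + (Real.sin p.2 : ℂ) * Complex.I) ≠ 0 :=
    left_ne_zero_of_mul_eq_one hI
  rw [Real.cot_eq_cos_div_sin]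
  have hsne : (Real.sin p.2 : ℂ) ≠ 0 := Complex.ofReal_ne_zero.mpr hs.ne'
  have hDne : ((Real.sin p.1 : ℂ) + (Real.cos p.2 : ℂ)) ≠ 0 := by
    intro h; apply hD
    exact_mod_cast (by push_cast at h ⊢; exact h : ((Real.sin p.1 + Real.cos p.2 : ℝ) : ℂ) = 0)
  simp only [Complex.ofReal_div, Complex.ofReal_add, Complex.ofReal_mul, Complex.ofReal_pow,
    Complex.ofReal_sub, Complex.ofReal_ofNat, Complex.ofReal_one, Complex.ofReal_neg]
  generalize hg1 : ((Real.sin p.1 : ℝ) : ℂ) = sg at hDne ⊢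
  generalize hg2 : ((Real.cos p.2 : ℝ) : ℂ) = cs at hI hcne h2 hDne ⊢
  generalize hg3 : ((Real.sin p.2 : ℝ) : ℂ) = ss at hI hcne h2 hsne ⊢
  field_simp
  linear_combination (-G) * hI

lemma integrand_U {p : ℝ × ℝ} (hs : 0 < Real.sin p.2)
    (hD : 0 < Real.sin p.1 + Real.cos p.2) (G : ℂ) :
    |(fder p).det| • (G / ((starRingEnd ℂ) (umap p + 1) * (umap p - 1))) =
      (-(1/2) : ℂ) * (((-(Real.cot p.2 : ℂ)) + Complex.I) * G) := by
  rw [det_fder hs.ne', abs_of_pos (div_pos hD (pow_pos hs 3)), Complex.real_smul,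
    integrand_core hs hD.ne' G]
  ring

lemma integrand_L {p : ℝ × ℝ} (hs : 0 < Real.sin p.2)
    (hD : Real.sin p.1 + Real.cos p.2 < 0) (G : ℂ) :
    |(fder p).det| • (G / ((starRingEnd ℂ) (umap p + 1) * (umap p - 1))) =
      (-(1/2) : ℂ) * ((((Real.cot p.2 : ℂ)) - Complex.I) * G) := by
  rw [det_fder hs.ne', abs_of_neg (div_neg_of_neg_of_pos hD (pow_pos hs 3))]
  have hcore := integrand_core hs hD.ne G
  rw [show ((-((Real.sin p.1 + Real.cos p.2) / Real.sin p.2 ^ 3) : ℝ)) •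
      (G / ((starRingEnd ℂ) (umap p + 1) * (umap p - 1))) =
      -((((Real.sin p.1 + Real.cos p.2) / Real.sin p.2 ^ 3 : ℝ) : ℂ) *
        (G / ((starRingEnd ℂ) (umap p + 1) * (umap p - 1)))) by
    rw [Complex.real_smul]; push_cast; ring]
  rw [hcore]
  ring

lemma null_vert : volume {p : ℝ × ℝ | p.1 = π} = 0 := by
  have : {p : ℝ × ℝ | p.1 = π} = ({π} : Set ℝ) ×ˢ (univ : Set ℝ) := by
    ext p
    simp only [mem_setOf_eq, Set.mem_prod, mem_singleton_iff, mem_univ, and_true]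
  rw [this, Measure.volume_eq_prod, Measure.prod_prod]
  simp

end IgAux

open IgAux in
/-- For bounded measurable `g` with compact essential support,
`I_g = (1/2π)∫_U (-cot θ + i)·g(u(t,θ)) dt dθ + (1/2π)∫_L (cot θ - i)·g(u(t,θ)) dt dθ`. -/
theorem Ig_eq_cylinder_integral
    (g : ℂ → ℝ) (hmeas : Measurable g)
    (hbdd : ∃ M : ℝ, ∀ u : ℂ, |g u| ≤ M)
    (hsupp : ∃ R : ℝ, ∀ᵐ u : ℂ ∂volume, R < ‖u‖ → g u = 0) :
    Ig g = (1 / (2 * Real.pi) : ℂ) *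
        (∫ p in Uset, ((-(Real.cot p.2 : ℂ)) + Complex.I) * (g (umap p) : ℂ)) +
      (1 / (2 * Real.pi) : ℂ) *
        (∫ p in Lset, ((Real.cot p.2 : ℂ) - Complex.I) * (g (umap p) : ℂ)) := by
  set f : ℂ → ℂ := fun u => (g u : ℂ) / ((starRingEnd ℂ) (u + 1) * (u - 1)) with hf_def
  have hfint : Integrable f volume := integrable_f g hmeas hbdd hsupp
  set F : ℝ × ℝ → ℂ := fun q => f (↑q.1 + ↑q.2 * Complex.I) with hF_def
  have hFint : Integrable F volume := (integrable_complex_iff f).mpr hfint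
  set SU : Set (ℝ × ℝ) :=
    (Ioo (-π) π ×ˢ Ioo 0 π) ∩ {p | 0 < Real.sin p.1 + Real.cos p.2} with hSU_def
  set SL : Set (ℝ × ℝ) :=
    (Ioo (-π) π ×ˢ Ioo 0 π) ∩ {p | Real.sin p.1 + Real.cos p.2 < 0} with hSL_def
  have hcont : Continuous fun p : ℝ × ℝ => Real.sin p.1 + Real.cos p.2 := by fun_prop
  have hSUmeas : MeasurableSet SU :=
    ((isOpen_Ioo.prod isOpen_Ioo).inter (isOpen_lt continuous_const hcont)).measurableSet
  have hSLmeas : MeasurableSet SL :=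
    ((isOpen_Ioo.prod isOpen_Ioo).inter (isOpen_lt hcont continuous_const)).measurableSet
  have hinjU : InjOn phi SU := by
    refine injOn_phi.mono fun p hp => ?_
    exact ⟨⟨hp.1.1.1, hp.1.1.2.le⟩, hp.1.2, ne_of_gt hp.2⟩
  have hinjL : InjOn phi SL := by
    refine injOn_phi.mono fun p hp => ?_
    exact ⟨⟨hp.1.1.1, hp.1.1.2.le⟩, hp.1.2, ne_of_lt hp.2⟩
  have hsinpos : ∀ p : ℝ × ℝ, p.2 ∈ Ioo 0 π → 0 < Real.sin p.2 := fun p hp =>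
    Real.sin_pos_of_pos_of_lt_pi hp.1 hp.2
  have hderU : ∀ p ∈ SU, HasFDerivWithinAt phi (fder p) SU p := fun p hp =>
    (hasFDerivAt_phi (hsinpos p hp.1.2).ne').hasFDerivWithinAt
  have hderL : ∀ p ∈ SL, HasFDerivWithinAt phi (fder p) SL p := fun p hp =>
    (hasFDerivAt_phi (hsinpos p hp.1.2).ne').hasFDerivWithinAt
  -- image characterizations
  have haeU : {q : ℝ × ℝ | 0 < q.2} =ᵐ[volume] phi '' SU := by
    have himU : phi '' SU ⊆ {q : ℝ × ℝ | 0 < q.2} := by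
      rintro q ⟨p, hp, rfl⟩
      have h1 := hsinpos p hp.1.2
      have h2 := hp.2
      simp only [phi, mem_setOf_eq]
      exact mul_pos h2 (inv_pos.mpr h1)
    have hcoU : {q : ℝ × ℝ | 0 < q.2} \ phi '' SU ⊆
        {q : ℝ × ℝ | q.1 = -Real.sqrt (1 + q.2 ^ 2)} := by
      rintro q ⟨hq, hqn⟩
      by_contra hq1
      apply hqn
      obtain ⟨p, hp1, hp2, hp3, hp4⟩ := phi_surj (ne_of_gt hq) hq1
      refine ⟨p, ⟨⟨hp1, hp2⟩, ?_⟩, hp4⟩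
      show 0 < Real.sin p.1 + Real.cos p.2
      rw [hp3]
      exact mul_pos hq (hsinpos p hp2)
    rw [Filter.eventuallyEq_set]
    filter_upwards [measure_eq_zero_iff_ae_notMem.mp null_hyper] with q hq
    exact ⟨fun h => by_contra fun hn => hq (hcoU ⟨h, hn⟩), fun h => himU h⟩
  have haeL : {q : ℝ × ℝ | q.2 < 0} =ᵐ[volume] phi '' SL := by
    have himL : phi '' SL ⊆ {q : ℝ × ℝ | q.2 < 0} := by
      rintro q ⟨p, hp, rfl⟩
      have h1 := hsinpos p hp.1.2
      have h2 := hp.2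
      simp only [phi, mem_setOf_eq]
      exact mul_neg_of_neg_of_pos h2 (by positivity)
    have hcoL : {q : ℝ × ℝ | q.2 < 0} \ phi '' SL ⊆
        {q : ℝ × ℝ | q.1 = -Real.sqrt (1 + q.2 ^ 2)} := by
      rintro q ⟨hq, hqn⟩
      by_contra hq1
      apply hqn
      obtain ⟨p, hp1, hp2, hp3, hp4⟩ := phi_surj (ne_of_lt hq) hq1
      refine ⟨p, ⟨⟨hp1, hp2⟩, ?_⟩, hp4⟩
      show Real.sin p.1 + Real.cos p.2 < 0
      rw [hp3]
      exact mul_neg_of_neg_of_pos hq (hsinpos p hp2)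
    rw [Filter.eventuallyEq_set]
    filter_upwards [measure_eq_zero_iff_ae_notMem.mp null_hyper] with q hq
    exact ⟨fun h => by_contra fun hn => hq (hcoL ⟨h, hn⟩), fun h => himL h⟩
  -- pointwise rewriting of the transformed integrand
  have hFphi : ∀ p : ℝ × ℝ, F (phi p) =
      (g (umap p) : ℂ) / ((starRingEnd ℂ) (umap p + 1) * (umap p - 1)) := by
    intro p
    rw [hF_def]
    dsimp only
    rw [← umap_eq p, hf_def]
  -- change of variables, upper part
  have hU : (∫ q in {q : ℝ × ℝ | 0 < q.2}, F q) =
      (-(1/2) : ℂ) * ∫ p in SU, ((-(Real.cot p.2 : ℂ)) + Complex.I) * (g (umap p) : ℂ) := by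
    rw [setIntegral_congr_set haeU,
      integral_image_eq_integral_abs_det_fderiv_smul volume hSUmeas hderU hinjU F,
      ← integral_const_mul]
    refine setIntegral_congr_fun hSUmeas fun p hp => ?_
    rw [hFphi p]
    exact integrand_U (hsinpos p hp.1.2) hp.2 _
  have hL : (∫ q in {q : ℝ × ℝ | q.2 < 0}, F q) =
      (-(1/2) : ℂ) * ∫ p in SL, (((Real.cot p.2 : ℂ)) - Complex.I) * (g (umap p) : ℂ) := by
    rw [setIntegral_congr_set haeL,
      integral_image_eq_integral_abs_det_fderiv_smul volume hSLmeas hderL hinjL F,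
      ← integral_const_mul]
    refine setIntegral_congr_fun hSLmeas fun p hp => ?_
    rw [hFphi p]
    exact integrand_L (hsinpos p hp.1.2) hp.2 _
  -- splitting the plane
  have hsplit : (∫ q : ℝ × ℝ, F q) =
      (∫ q in {q : ℝ × ℝ | 0 < q.2}, F q) + ∫ q in {q : ℝ × ℝ | q.2 < 0}, F q := by
    have h1 : (univ : Set (ℝ × ℝ)) =ᵐ[volume]
        (({q : ℝ × ℝ | 0 < q.2} ∪ {q : ℝ × ℝ | q.2 < 0} : Set (ℝ × ℝ))) := by
      rw [Filter.eventuallyEq_set]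
      filter_upwards [measure_eq_zero_iff_ae_notMem.mp null_horiz] with q hq
      simp only [mem_univ, true_iff, mem_union, mem_setOf_eq]
      rcases lt_trichotomy q.2 0 with h | h | h
      · exact Or.inr h
      · exact absurd h hq
      · exact Or.inl h
    have hdisj : Disjoint {q : ℝ × ℝ | 0 < q.2} {q : ℝ × ℝ | q.2 < 0} := by
      rw [Set.disjoint_left]
      intro q h1 h2
      simp only [mem_setOf_eq] at h1 h2
      linarith
    have hm2 : MeasurableSet {q : ℝ × ℝ | q.2 < 0} :=
      (isOpen_lt (continuous_snd) continuous_const).measurableSet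
    rw [← setIntegral_univ, setIntegral_congr_set h1,
      setIntegral_union hdisj hm2 hFint.integrableOn hFint.integrableOn]
  -- identify cylinder integrals with SU/SL integrals
  have hUae : (Uset : Set (ℝ × ℝ)) =ᵐ[volume] SU := by
    rw [Filter.eventuallyEq_set]
    filter_upwards [measure_eq_zero_iff_ae_notMem.mp null_vert] with p hp
    constructor
    · rintro ⟨⟨h1, h2⟩, h3⟩
      refine ⟨⟨⟨h1.1, lt_of_le_of_ne h1.2 ?_⟩, h2⟩, h3⟩
      exact fun h => hp h
    · rintro ⟨⟨h1, h2⟩, h3⟩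
      exact ⟨⟨⟨h1.1, h1.2.le⟩, h2⟩, h3⟩
  have hLae : (Lset : Set (ℝ × ℝ)) =ᵐ[volume] SL := by
    rw [Filter.eventuallyEq_set]
    filter_upwards [measure_eq_zero_iff_ae_notMem.mp null_vert] with p hp
    constructor
    · rintro ⟨⟨h1, h2⟩, h3⟩
      refine ⟨⟨⟨h1.1, lt_of_le_of_ne h1.2 ?_⟩, h2⟩, h3⟩
      exact fun h => hp h
    · rintro ⟨⟨h1, h2⟩, h3⟩
      exact ⟨⟨⟨h1.1, h1.2.le⟩, h2⟩, h3⟩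
  have hUeq : (∫ p in Uset, ((-(Real.cot p.2 : ℂ)) + Complex.I) * (g (umap p) : ℂ)) =
      ∫ p in SU, ((-(Real.cot p.2 : ℂ)) + Complex.I) * (g (umap p) : ℂ) :=
    setIntegral_congr_set hUae
  have hLeq : (∫ p in Lset, (((Real.cot p.2 : ℂ)) - Complex.I) * (g (umap p) : ℂ)) =
      ∫ p in SL, (((Real.cot p.2 : ℂ)) - Complex.I) * (g (umap p) : ℂ) :=
    setIntegral_congr_set hLae
  -- assemble
  have hmain : (∫ u : ℂ, f u) =
      (-(1/2) : ℂ) * (∫ p in Uset, ((-(Real.cot p.2 : ℂ)) + Complex.I) * (g (umap p) : ℂ)) +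
      (-(1/2) : ℂ) * (∫ p in Lset, (((Real.cot p.2 : ℂ)) - Complex.I) * (g (umap p) : ℂ)) := by
    rw [← integral_complex_eq f, ← hF_def, hsplit, hU, hL, hUeq, hLeq]
  have hIg : Ig g = -(1 / Real.pi : ℂ) * ∫ u : ℂ, f u := by rw [Ig, hf_def]
  rw [hIg, hmain]
  have hπ : (Real.pi : ℂ) ≠ 0 := Complex.ofReal_ne_zero.mpr Real.pi_ne_zero
  field_simp
  ring
end

section
/- For every g ∈ G₁, the real part of I_g satisfies Re(I_g) ≤ ln 2, where I_g = −(1/π)∫_ℂ g(u)/(conj(u+1)·(u−1)) da(u). -/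
open MeasureTheory

section aux
open Real Set
open scoped ENNReal

theorem lintegral_comp_polarCoord_symm' (f : ℝ × ℝ → ℝ≥0∞) :
    ∫⁻ p in polarCoord.target, ENNReal.ofReal p.1 * f (polarCoord.symm p) = ∫⁻ p, f p := by
  set B : ℝ × ℝ → ℝ × ℝ →L[ℝ] ℝ × ℝ := fun p =>
    LinearMap.toContinuousLinearMap (Matrix.toLin (Module.Basis.finTwoProd ℝ) (Module.Basis.finTwoProd ℝ)
      !![Real.cos p.2, -p.1 * Real.sin p.2; Real.sin p.2, p.1 * Real.cos p.2])
  have B_det : ∀ p, (B p).det = p.1 := by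
    intro p
    conv_rhs => rw [← one_mul p.1, ← cos_sq_add_sin_sq p.2]
    simp only [B, neg_mul, LinearMap.det_toContinuousLinearMap, LinearMap.det_toLin,
      Matrix.det_fin_two_of, sub_neg_eq_add]
    ring
  symm
  calc
    ∫⁻ p, f p = ∫⁻ p in polarCoord.source, f p := by
      rw [← setLIntegral_univ, Measure.restrict_congr_set polarCoord_source_ae_eq_univ]
    _ = ∫⁻ p in polarCoord.symm '' polarCoord.target, f p := by
      rw [polarCoord.symm_image_target_eq_source]
    _ = ∫⁻ p in polarCoord.target, ENNReal.ofReal |(B p).det| * f (polarCoord.symm p) := by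
      rw [lintegral_image_eq_lintegral_abs_det_fderiv_mul volume
        polarCoord.open_target.measurableSet
        (fun p _ => (hasFDerivAt_polarCoord_symm p).hasFDerivWithinAt)
        polarCoord.symm.injOn]
      simp_rw [det_fderivPolarCoordSymm, B_det]
    _ = ∫⁻ p in polarCoord.target, ENNReal.ofReal p.1 * f (polarCoord.symm p) := by
      refine setLIntegral_congr_fun_ae polarCoord.open_target.measurableSet
        (Filter.Eventually.of_forall fun p hp => ?_)
      rw [B_det, abs_of_pos hp.1]

theorem Complex.lintegral_comp_polarCoord_symm' (f : ℂ → ℝ≥0∞) :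
    ∫⁻ p in polarCoord.target, ENNReal.ofReal p.1 * f (Complex.polarCoord.symm p) = ∫⁻ z, f z := by
  rw [← (Complex.volume_preserving_equiv_real_prod.symm).lintegral_comp_emb
    Complex.measurableEquivRealProd.symm.measurableEmbedding,
    ← _root_.lintegral_comp_polarCoord_symm' (fun p => f (Complex.measurableEquivRealProd.symm p))]
  rfl

lemma poisson_denom_pos {a : ℝ} (ha0 : 0 ≤ a) (ha : a < 1) (θ : ℝ) :
    0 < 1 - 2 * a * Real.cos θ + a ^ 2 := by
  nlinarith [Real.neg_one_le_cos θ, Real.cos_le_one θ, sq_nonneg (1 - a), sq_nonneg (1 + a)]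

lemma poisson_summable {a : ℝ} (ha0 : 0 ≤ a) (ha : a < 1) (θ : ℝ) :
    Summable (fun n : ℕ => a ^ (n + 1) * Real.cos ((n + 1) * θ)) := by
  apply Summable.of_norm
  refine Summable.of_nonneg_of_le (fun n => norm_nonneg _) (fun n => ?_)
    ((summable_geometric_of_lt_one ha0 ha).mul_left a)
  rw [Real.norm_eq_abs, abs_mul, abs_of_nonneg (pow_nonneg ha0 _)]
  have h1 : |Real.cos ((n+1) * θ)| ≤ 1 := Real.abs_cos_le_one _
  have h2 : (0:ℝ) ≤ a ^ (n+1) := pow_nonneg ha0 _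
  nlinarith [pow_succ a n]

lemma poisson_series {a : ℝ} (ha0 : 0 ≤ a) (ha : a < 1) (θ : ℝ) :
    (1 - 2 * a * Real.cos θ + a ^ 2)⁻¹
      = (1 - a ^ 2)⁻¹ * (1 + 2 * ∑' n : ℕ, a ^ (n + 1) * Real.cos ((n + 1) * θ)) := by
  set z : ℂ := (a : ℂ) * Complex.exp (θ * Complex.I) with hz_def
  have hre : z.re = a * Real.cos θ := by
    simp [hz_def, Complex.re_ofReal_mul, Complex.exp_ofReal_mul_I_re]
  have hzn : ∀ n : ℕ, (z ^ n).re = a ^ n * Real.cos (n * θ) := by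
    intro n
    have : z ^ n = ((a ^ n : ℝ) : ℂ) * Complex.exp ((n * θ : ℝ) * Complex.I) := by
      rw [hz_def, mul_pow, ← Complex.exp_nat_mul]
      push_cast
      ring_nf
    rw [this, Complex.re_ofReal_mul, Complex.exp_ofReal_mul_I_re]
  have hnz : ‖z‖ < 1 := by
    rw [hz_def]
    simp only [norm_mul, Complex.norm_real, Real.norm_eq_abs, abs_of_nonneg ha0]
    rw [Complex.norm_exp_ofReal_mul_I]
    simpa using ha
  have hsum : Summable (fun n : ℕ => z ^ n) := summable_geometric_of_norm_lt_one hnz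
  have htsum : (∑' n : ℕ, z ^ n) = (1 - z)⁻¹ := tsum_geometric_of_norm_lt_one hnz
  set d : ℝ := 1 - 2 * a * Real.cos θ + a ^ 2 with hd_def
  have hd : 0 < d := poisson_denom_pos ha0 ha θ
  have hnormSq : Complex.normSq (1 - z) = d := by
    rw [Complex.normSq_apply]
    have him : z.im = a * Real.sin θ := by
      simp [hz_def, Complex.exp_ofReal_mul_I_im]
    simp only [Complex.sub_re, Complex.sub_im, Complex.one_re, Complex.one_im, hre, him]
    have := Real.sin_sq_add_cos_sq θ
    nlinarith [this]
  have hre_inv : ((1 - z)⁻¹).re = (1 - a * Real.cos θ) / d := by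
    rw [Complex.inv_re, hnormSq]
    simp [hre]
  have hres : (∑' n : ℕ, a ^ n * Real.cos (n * θ)) = (1 - a * Real.cos θ) / d := by
    rw [← hre_inv, ← htsum, Complex.re_tsum hsum]
    exact tsum_congr fun n => (hzn n).symm
  have hsum' : Summable (fun n : ℕ => a ^ n * Real.cos (n * θ)) := by
    have := hsum.map Complex.reAddGroupHom Complex.continuous_re
    simpa [Function.comp_def, hzn] using this
  have hsplit : (∑' n : ℕ, a ^ n * Real.cos (n * θ))
      = 1 + ∑' n : ℕ, a ^ (n + 1) * Real.cos ((n + 1) * θ) := by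
    rw [Summable.tsum_eq_zero_add hsum']
    push_cast
    simp
  have hT : (∑' n : ℕ, a ^ (n + 1) * Real.cos ((n + 1) * θ)) = (1 - a * Real.cos θ) / d - 1 := by
    rw [← hres, hsplit]; ring
  rw [hT]
  have h1a : (1 : ℝ) - a ^ 2 ≠ 0 := by nlinarith
  field_simp
  ring

lemma integral_cos_mul_zero (n : ℕ) :
    ∫ θ in Ioo (-π) π, Real.cos ((n + 1) * (2 * θ)) = 0 := by
  have h : ∫ θ in Ioo (-π) π, Real.cos ((n + 1) * (2 * θ))
      = ∫ θ in (-π)..π, Real.cos ((2 * (n + 1) : ℝ) * θ) := by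
    rw [intervalIntegral.integral_of_le (by linarith [Real.pi_pos] : -π ≤ π),
      ← integral_Ioc_eq_integral_Ioo]
    congr 1
    ext θ
    ring_nf
  rw [h]
  have hc : (2 * ((n : ℝ) + 1)) ≠ 0 := by positivity
  rw [intervalIntegral.integral_comp_mul_left (fun x => Real.cos x) hc]
  rw [integral_cos]
  have h1 : Real.sin (2 * ((n:ℝ) + 1) * π) = 0 := by
    rw [show 2 * ((n:ℝ) + 1) * π = ((2 * (n + 1) : ℕ) : ℝ) * π by push_cast; ring]
    exact Real.sin_nat_mul_pi _
  have h2 : Real.sin (2 * ((n:ℝ) + 1) * -π) = 0 := by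
    rw [mul_neg, Real.sin_neg, h1, neg_zero]
  simp [h1, h2]

lemma poisson_cont (ha0 : 0 ≤ a) (ha : a < 1) :
    Continuous fun θ : ℝ => (1 - 2 * a * Real.cos (2 * θ) + a ^ 2)⁻¹ := by
  apply Continuous.inv₀
  · fun_prop
  · exact fun θ => (poisson_denom_pos ha0 ha (2 * θ)).ne'

lemma poisson_int (ha0 : 0 ≤ a) (ha : a < 1) :
    ∫ θ in Ioo (-π) π, (1 - 2 * a * Real.cos (2 * θ) + a ^ 2)⁻¹ = 2 * π / (1 - a ^ 2) := by
  have h1a : (0:ℝ) < 1 - a ^ 2 := by nlinarith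
  have key : ∀ θ : ℝ, (1 - 2 * a * Real.cos (2 * θ) + a ^ 2)⁻¹
      = (1 - a ^ 2)⁻¹ + ∑' n : ℕ, (1 - a ^ 2)⁻¹ * 2 * (a ^ (n + 1) * Real.cos ((n + 1) * (2 * θ))) := by
    intro θ
    rw [poisson_series ha0 ha (2 * θ), tsum_mul_left]
    ring
  have hint : IntegrableOn (fun θ : ℝ => (1 - 2 * a * Real.cos (2 * θ) + a ^ 2)⁻¹)
      (Ioo (-π) π) := ((poisson_cont ha0 ha).integrableOn_Icc).mono_set Ioo_subset_Icc_self
  have hint2 : IntegrableOn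
      (fun θ : ℝ => ∑' n : ℕ, (1 - a ^ 2)⁻¹ * 2 * (a ^ (n + 1) * Real.cos ((n + 1) * (2 * θ))))
      (Ioo (-π) π) := by
    have : (fun θ : ℝ => ∑' n : ℕ, (1 - a ^ 2)⁻¹ * 2 * (a ^ (n + 1) * Real.cos ((n + 1) * (2 * θ))))
        = fun θ : ℝ => (1 - 2 * a * Real.cos (2 * θ) + a ^ 2)⁻¹ - (1 - a ^ 2)⁻¹ := by
      funext θ
      rw [key θ]; ring
    rw [this]
    exact hint.sub (integrableOn_const measure_Ioo_lt_top.ne)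
  simp_rw [key]
  rw [integral_add (integrableOn_const (C := (1 - a ^ 2)⁻¹) (s := Ioo (-π) π) (μ := volume) measure_Ioo_lt_top.ne : Integrable (fun _ : ℝ => (1 - a ^ 2)⁻¹) (volume.restrict (Ioo (-π) π))) hint2]
  rw [integral_tsum]
  · simp_rw [integral_const_mul, integral_cos_mul_zero]
    simp only [mul_zero, tsum_zero, add_zero]
    rw [setIntegral_const, Real.volume_real_Ioo_of_le (by linarith [Real.pi_pos] : -π ≤ π), smul_eq_mul,
      div_eq_mul_inv]
    ring
  · intro n
    exact Continuous.aestronglyMeasurable (by fun_prop)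
  · apply ne_of_lt
    calc ∑' n : ℕ, ∫⁻ θ in Ioo (-π) π, ‖(1 - a ^ 2)⁻¹ * 2 * (a ^ (n + 1) * Real.cos ((n + 1) * (2 * θ)))‖₊
        ≤ ∑' n : ℕ, (ENNReal.ofReal ((1 - a ^ 2)⁻¹ * 2 * a) * ENNReal.ofReal a ^ n) * volume (Ioo (-π) π) := by
          apply ENNReal.tsum_le_tsum
          intro n
          calc ∫⁻ θ in Ioo (-π) π, ‖(1 - a ^ 2)⁻¹ * 2 * (a ^ (n + 1) * Real.cos ((n + 1) * (2 * θ)))‖₊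
              ≤ ∫⁻ _ in Ioo (-π) π, ENNReal.ofReal ((1 - a ^ 2)⁻¹ * 2 * a) * ENNReal.ofReal a ^ n := by
                apply lintegral_mono
                intro θ
                simp only
                rw [← enorm_eq_nnnorm, Real.enorm_eq_ofReal_abs, ← ENNReal.ofReal_pow ha0,
                  ← ENNReal.ofReal_mul (by positivity)]
                apply ENNReal.ofReal_le_ofReal
                have h1 : |Real.cos ((n+1) * (2*θ))| ≤ 1 := Real.abs_cos_le_one _
                have h2 : (0:ℝ) ≤ a ^ n := pow_nonneg ha0 _
                have h3 : (0:ℝ) ≤ (1 - a^2)⁻¹ := by positivity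
                rw [abs_mul, abs_mul, abs_mul, abs_of_nonneg h3, abs_pow, abs_of_nonneg ha0]
                simp only [abs_two]
                have h4 : (0:ℝ) ≤ (1 - a^2)⁻¹ * 2 * (a ^ n * a) := by positivity
                rw [pow_succ a n]
                nlinarith [mul_le_mul_of_nonneg_left h1 h4]
              _ = ENNReal.ofReal ((1 - a ^ 2)⁻¹ * 2 * a) * ENNReal.ofReal a ^ n * volume (Ioo (-π) π) := by
                rw [setLIntegral_const]
      _ < ⊤ := by
          rw [ENNReal.tsum_mul_right, ENNReal.tsum_mul_left, ENNReal.tsum_geometric]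
          have hlt : ENNReal.ofReal a < 1 := by
            rw [← ENNReal.ofReal_one]
            exact (ENNReal.ofReal_lt_ofReal_iff_of_nonneg ha0).mpr ha
          exact ENNReal.mul_lt_top
            (ENNReal.mul_lt_top ENNReal.ofReal_lt_top (ENNReal.inv_lt_top.mpr (tsub_pos_of_lt hlt)))
            measure_Ioo_lt_top


noncomputable def Pfun (u : ℂ) : ℝ :=
  (1 - Complex.normSq u) / (Complex.normSq (u + 1) * Complex.normSq (u - 1))

lemma measurable_Pfun : Measurable Pfun := by
  have h1 : Continuous fun u : ℂ => 1 - Complex.normSq u :=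
    continuous_const.sub Complex.continuous_normSq
  have h2 : Continuous fun u : ℂ => Complex.normSq (u + 1) * Complex.normSq (u - 1) :=
    (Complex.continuous_normSq.comp (continuous_id.add continuous_const)).mul
      (Complex.continuous_normSq.comp (continuous_id.sub continuous_const))
  exact h1.measurable.div h2.measurable

lemma Pfun_polar {r : ℝ} (θ : ℝ) :
    Pfun (Complex.polarCoord.symm (r, θ))
      = (1 - r ^ 2) * (1 - 2 * r ^ 2 * Real.cos (2 * θ) + (r ^ 2) ^ 2)⁻¹ := by
  have hs := Real.sin_sq_add_cos_sq θ
  have hc := Real.cos_two_mul θ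
  simp only [Pfun, Complex.polarCoord_symm_apply, Complex.normSq_apply]
  simp only [Complex.add_re, Complex.add_im, Complex.sub_re, Complex.sub_im, Complex.mul_re,
    Complex.mul_im, Complex.ofReal_re, Complex.ofReal_im, Complex.one_re, Complex.one_im,
    Complex.I_re, Complex.I_im]
  rw [div_eq_mul_inv]
  congr 1
  · linear_combination (-(r^2)) * hs
  · congr 1
    linear_combination (r^2*(r^2*(Real.sin θ^2 + Real.cos θ^2 - 1) + 2*(r^2+1))) * hs
      + 2*r^2 * hc

lemma inner_lint {r : ℝ} (hr0 : 0 < r) (hr1 : r < 1) :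
    ∫⁻ θ in Ioo (-π) π, ENNReal.ofReal (r * Pfun (Complex.polarCoord.symm (r, θ)))
      = ENNReal.ofReal (2 * π * r / (1 + r ^ 2)) := by
  have ha0 : (0:ℝ) ≤ r ^ 2 := sq_nonneg r
  have ha1 : r ^ 2 < 1 := by nlinarith
  simp_rw [Pfun_polar]
  rw [← ofReal_integral_eq_lintegral_ofReal]
  · congr 1
    rw [integral_const_mul, integral_const_mul, poisson_int ha0 ha1]
    have h4 : (1:ℝ) - (r^2)^2 ≠ 0 := by nlinarith
    have h5 : (1:ℝ) + r^2 ≠ 0 := by positivity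
    have h4' : (1:ℝ) - r ^ 4 ≠ 0 := by nlinarith
    field_simp
    ring
  · exact ((continuous_const.mul (continuous_const.mul
      (poisson_cont ha0 ha1))).integrableOn_Icc).mono_set Ioo_subset_Icc_self
  · refine Filter.Eventually.of_forall fun θ => ?_
    have hd := (poisson_denom_pos ha0 ha1 (2 * θ)).le
    have h6 : (0:ℝ) ≤ 1 - r ^ 2 := by nlinarith
    exact mul_nonneg hr0.le (mul_nonneg h6 (inv_nonneg.mpr hd))

lemma continuous_polar_symm : Continuous fun p : ℝ × ℝ => Complex.polarCoord.symm p := by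
  have : ∀ p : ℝ × ℝ, Complex.polarCoord.symm p
      = (p.1 : ℂ) * (Real.cos p.2 + Real.sin p.2 * Complex.I) := fun p =>
    Complex.polarCoord_symm_apply p
  simp_rw [this]
  fun_prop

lemma mem_ball_symm_iff {r θ : ℝ} (hr : 0 < r) {ε : ℝ} :
    Complex.polarCoord.symm (r, θ) ∈ Metric.ball (0:ℂ) ε ↔ r < ε := by
  rw [Metric.mem_ball, dist_zero_right, Complex.norm_polarCoord_symm,
    abs_of_pos hr]

/-- Change to polar coordinates and Tonelli, for a function supported in the unit ball. -/
lemma polar_tonelli (f : ℂ → ℝ≥0∞) (hf : Measurable f) :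
    ∫⁻ z, f z
      = ∫⁻ r in Ioi (0:ℝ), ∫⁻ θ in Ioo (-π) π, ENNReal.ofReal r * f (Complex.polarCoord.symm (r, θ)) := by
  rw [← Complex.lintegral_comp_polarCoord_symm' f, show polarCoord.target = Ioi (0:ℝ) ×ˢ Ioo (-π) π from rfl]
  have hrestrict : (volume : Measure (ℝ × ℝ)).restrict (Ioi (0:ℝ) ×ˢ Ioo (-π) π)
      = (volume.restrict (Ioi (0:ℝ))).prod (volume.restrict (Ioo (-π) π)) := by
    rw [Measure.prod_restrict, ← Measure.volume_eq_prod]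
  rw [hrestrict, lintegral_prod]
  exact ((ENNReal.measurable_ofReal.comp measurable_fst).mul
    (hf.comp (continuous_polar_symm.measurable.comp measurable_id))).aemeasurable

lemma lintegral_ball_P :
    ∫⁻ u in Metric.ball (0:ℂ) 1, ENNReal.ofReal (Pfun u) = ENNReal.ofReal (π * Real.log 2) := by
  have hπ := Real.pi_pos
  rw [← lintegral_indicator measurableSet_ball _,
    polar_tonelli _ (measurable_Pfun.ennreal_ofReal.indicator measurableSet_ball)]
  have hstep : ∀ r ∈ Ioi (0:ℝ),
      (∫⁻ θ in Ioo (-π) π, ENNReal.ofReal r *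
        (Metric.ball (0:ℂ) 1).indicator (fun u => ENNReal.ofReal (Pfun u))
          (Complex.polarCoord.symm (r, θ)))
      = (Ioo (0:ℝ) 1).indicator (fun r => ENNReal.ofReal (2 * π * r / (1 + r ^ 2))) r := by
    intro r hr
    rw [mem_Ioi] at hr
    rcases lt_or_ge r 1 with h1 | h1
    · rw [indicator_of_mem (by exact ⟨hr, h1⟩)]
      rw [← inner_lint hr h1]
      refine setLIntegral_congr_fun_ae measurableSet_Ioo (Filter.Eventually.of_forall fun θ _ => ?_)
      rw [indicator_of_mem ((mem_ball_symm_iff hr).2 h1),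
        ENNReal.ofReal_mul hr.le]
    · rw [indicator_of_notMem (by simp [h1, not_lt])]
      have : ∀ θ : ℝ, (Metric.ball (0:ℂ) 1).indicator (fun u => ENNReal.ofReal (Pfun u))
          (Complex.polarCoord.symm (r, θ)) = 0 := fun θ =>
        indicator_of_notMem (fun hm => absurd ((mem_ball_symm_iff hr).1 hm) (not_lt.2 h1)) _
      simp_rw [this, mul_zero, lintegral_zero]
  rw [setLIntegral_congr_fun_ae measurableSet_Ioi (Filter.Eventually.of_forall hstep)]
  rw [lintegral_indicator measurableSet_Ioo _, Measure.restrict_restrict measurableSet_Ioo,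
    inter_eq_left.mpr Ioo_subset_Ioi_self]
  rw [← ofReal_integral_eq_lintegral_ofReal]
  · congr 1
    rw [← integral_Ioc_eq_integral_Ioo, ← intervalIntegral.integral_of_le (by norm_num : (0:ℝ) ≤ 1)]
    have hF : ∀ x ∈ uIcc (0:ℝ) 1, HasDerivAt (fun r : ℝ => π * Real.log (1 + r ^ 2))
        (2 * π * x / (1 + x ^ 2)) x := by
      intro x _
      have h1 : HasDerivAt (fun r : ℝ => 1 + r ^ 2) (2 * x) x := by
        simpa using (hasDerivAt_pow 2 x).const_add 1
      have h2 := (Real.hasDerivAt_log (by positivity : (1:ℝ) + x ^ 2 ≠ 0)).comp x h1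
      have h3 := h2.const_mul π
      rw [show 2 * π * x / (1 + x ^ 2) = π * ((1 + x ^ 2)⁻¹ * (2 * x)) by ring]
      exact h3
    rw [intervalIntegral.integral_eq_sub_of_hasDerivAt hF]
    · norm_num
    · apply Continuous.intervalIntegrable
      apply Continuous.div (by fun_prop) (by fun_prop)
      intro x; positivity
  · have hcont : Continuous fun r : ℝ => 2 * π * r / (1 + r ^ 2) :=
      Continuous.div (by fun_prop) (by fun_prop) (fun x => by positivity)
    exact hcont.integrableOn_Icc.mono_set Ioo_subset_Icc_self
  · refine (ae_restrict_iff' measurableSet_Ioo).2 (Filter.Eventually.of_forall fun r hr => ?_)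
    have h0 : 0 < r := hr.1
    positivity

lemma lintegral_ball_inv_norm_zero :
    ∫⁻ u in Metric.ball (0:ℂ) 1, ENNReal.ofReal (‖u‖⁻¹) < ⊤ := by
  have hπ := Real.pi_pos
  rw [← lintegral_indicator measurableSet_ball _,
    polar_tonelli ((Metric.ball (0:ℂ) 1).indicator (fun u => ENNReal.ofReal (‖u‖⁻¹))) ((measurable_norm.inv.ennreal_ofReal).indicator measurableSet_ball)]
  have hstep : ∀ r ∈ Ioi (0:ℝ),
      (∫⁻ θ in Ioo (-π) π, ENNReal.ofReal r *
        (Metric.ball (0:ℂ) 1).indicator (fun u => ENNReal.ofReal (‖u‖⁻¹))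
          (Complex.polarCoord.symm (r, θ)))
      ≤ (Ioo (0:ℝ) 1).indicator (fun _ => ENNReal.ofReal (2 * π)) r := by
    intro r hr
    rw [mem_Ioi] at hr
    rcases lt_or_ge r 1 with h1 | h1
    · rw [indicator_of_mem (by exact ⟨hr, h1⟩)]
      have hval : ∀ θ : ℝ, ENNReal.ofReal r *
          (Metric.ball (0:ℂ) 1).indicator (fun u => ENNReal.ofReal (‖u‖⁻¹))
            (Complex.polarCoord.symm (r, θ)) = 1 := by
        intro θ
        rw [indicator_of_mem ((mem_ball_symm_iff hr).2 h1)]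
        rw [← ENNReal.ofReal_mul hr.le]
        have : ‖Complex.polarCoord.symm (r, θ)‖ = r := by
          rw [Complex.norm_polarCoord_symm, abs_of_pos hr]
        rw [this, mul_inv_cancel₀ hr.ne', ENNReal.ofReal_one]
      simp_rw [hval]
      rw [setLIntegral_const, one_mul, Real.volume_Ioo]
      exact ENNReal.ofReal_le_ofReal (by linarith)
    · have : ∀ θ : ℝ, (Metric.ball (0:ℂ) 1).indicator (fun u => ENNReal.ofReal (‖u‖⁻¹))
          (Complex.polarCoord.symm (r, θ)) = 0 := fun θ =>
        indicator_of_notMem (fun hm => absurd ((mem_ball_symm_iff hr).1 hm) (not_lt.2 h1)) _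
      simp_rw [this, mul_zero, lintegral_zero]
      exact zero_le
  calc ∫⁻ r in Ioi (0:ℝ), _ ≤ ∫⁻ r in Ioi (0:ℝ),
      (Ioo (0:ℝ) 1).indicator (fun _ => ENNReal.ofReal (2 * π)) r :=
        setLIntegral_mono' measurableSet_Ioi hstep
    _ < ⊤ := by
        rw [lintegral_indicator measurableSet_Ioo _, Measure.restrict_restrict measurableSet_Ioo,
          inter_eq_left.mpr Ioo_subset_Ioi_self, setLIntegral_const]
        exact ENNReal.mul_lt_top ENNReal.ofReal_lt_top measure_Ioo_lt_top

lemma lintegral_ball_inv_norm (c : ℂ) :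
    ∫⁻ u in Metric.ball c 1, ENNReal.ofReal (‖u - c‖⁻¹) < ⊤ := by
  have mp : MeasurePreserving (fun u : ℂ => u + c) volume volume :=
    measurePreserving_add_right volume c
  have hemb : MeasurableEmbedding (fun u : ℂ => u + c) :=
    (MeasurableEquiv.addRight c).measurableEmbedding
  have hpre : (fun u : ℂ => u + c) ⁻¹' Metric.ball c 1 = Metric.ball 0 1 := by
    ext u
    simp [Metric.mem_ball, dist_eq_norm]
  have h := mp.setLIntegral_comp_preimage_emb hemb
    (fun u => ENNReal.ofReal (‖u - c‖⁻¹)) (Metric.ball c 1)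
  rw [hpre] at h
  rw [← h]
  simp only [add_sub_cancel_right]
  exact lintegral_ball_inv_norm_zero

lemma Pfun_nonneg_ball {u : ℂ} (hu : u ∈ Metric.ball (0:ℂ) 1) : 0 ≤ Pfun u := by
  have h1 : Complex.normSq u < 1 := by
    rw [Metric.mem_ball, dist_zero_right] at hu
    rw [← Complex.sq_norm]
    nlinarith [norm_nonneg u]
  apply div_nonneg (by linarith) (mul_nonneg (Complex.normSq_nonneg _) (Complex.normSq_nonneg _))

lemma Pfun_nonpos {u : ℂ} (hu : u ∉ Metric.ball (0:ℂ) 1) : Pfun u ≤ 0 := by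
  have h1 : 1 ≤ Complex.normSq u := by
    rw [Metric.mem_ball, dist_zero_right, not_lt] at hu
    rw [← Complex.sq_norm]
    nlinarith [norm_nonneg u]
  exact div_nonpos_of_nonpos_of_nonneg (by linarith)
    (mul_nonneg (Complex.normSq_nonneg _) (Complex.normSq_nonneg _))

lemma H_re (g : ℂ → ℝ) (u : ℂ) :
    ((g u : ℂ) / ((starRingEnd ℂ) (u + 1) * (u - 1))).re = -(g u * Pfun u) := by
  set w : ℂ := (starRingEnd ℂ) (u + 1) * (u - 1) with hw_def
  have hwre : w.re = -(1 - Complex.normSq u) := by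
    simp only [hw_def, Complex.mul_re, Complex.conj_re, Complex.conj_im, Complex.add_re,
      Complex.add_im, Complex.sub_re, Complex.sub_im, Complex.one_re, Complex.one_im,
      Complex.normSq_apply]
    ring
  have hwsq : Complex.normSq w = Complex.normSq (u + 1) * Complex.normSq (u - 1) := by
    rw [hw_def, map_mul, Complex.normSq_conj]
  have hdiv : ((g u : ℂ) / w).re = g u * w.re / Complex.normSq w := by
    rw [Complex.div_re]
    simp [Complex.ofReal_re, Complex.ofReal_im]
  rw [hdiv, hwre, hwsq, Pfun, mul_neg, neg_div, mul_div_assoc]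

lemma measurable_H (g : ℂ → ℝ) (hmeas : Measurable g) :
    Measurable fun u : ℂ => (g u : ℂ) / ((starRingEnd ℂ) (u + 1) * (u - 1)) := by
  apply Measurable.div
  · exact Complex.measurable_ofReal.comp hmeas
  · exact ((continuous_star.comp (continuous_id.add continuous_const)).mul
      (continuous_id.sub continuous_const)).measurable


end aux

section main
open Real Set
open scoped ENNReal

/-- For `g ∈ G₁`, `Re(I_g) ≤ ln 2`. -/
theorem re_Ig_le_log_two
    (g : ℂ → ℝ) (hmeas : Measurable g)
    (hsupp : ∃ R : ℝ, ∀ᵐ u : ℂ ∂volume, R < ‖u‖ → g u = 0)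
    (hbd : ∀ᵐ u : ℂ ∂volume, 0 ≤ g u ∧ g u ≤ 1) :
    (Ig g).re ≤ Real.log 2 := by
  have hπ := Real.pi_pos
  obtain ⟨R, hR⟩ := hsupp
  set H : ℂ → ℂ := fun u => (g u : ℂ) / ((starRingEnd ℂ) (u + 1) * (u - 1)) with hH_def
  have hHmeas : Measurable H := measurable_H g hmeas
  set f₁ : ℂ → ℝ≥0∞ :=
    (Metric.ball (-1:ℂ) 1).indicator (fun u => ENNReal.ofReal (‖u - (-1)‖⁻¹)) with hf₁
  set f₂ : ℂ → ℝ≥0∞ :=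
    (Metric.ball (1:ℂ) 1).indicator (fun u => ENNReal.ofReal (‖u - 1‖⁻¹)) with hf₂
  set f₃ : ℂ → ℝ≥0∞ :=
    (Metric.closedBall (0:ℂ) (max R 0)).indicator (fun _ => 1) with hf₃
  have m1 : Measurable f₁ :=
    ((measurable_id.sub_const _).norm.inv.ennreal_ofReal).indicator measurableSet_ball
  have m2 : Measurable f₂ :=
    ((measurable_id.sub_const _).norm.inv.ennreal_ofReal).indicator measurableSet_ball
  have m3 : Measurable f₃ := measurable_const.indicator measurableSet_closedBall
  have hdom : ∀ᵐ u : ℂ ∂volume, (‖H u‖₊ : ℝ≥0∞) ≤ f₁ u + f₂ u + f₃ u := by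
    filter_upwards [hR, hbd] with u hu1 hu2
    by_cases hg0 : g u = 0
    · simp only [hH_def, hg0, Complex.ofReal_zero, zero_div, nnnorm_zero, ENNReal.coe_zero]
      exact zero_le
    have hRu : ‖u‖ ≤ R := by
      by_contra hlt
      exact hg0 (hu1 (not_le.1 hlt))
    have hnorm : ‖H u‖ = g u / (‖u + 1‖ * ‖u - 1‖) := by
      rw [hH_def]
      simp only [norm_div, norm_mul, RCLike.norm_conj, Complex.norm_real,
        Real.norm_eq_abs, abs_of_nonneg hu2.1]
    have hcoe : (‖H u‖₊ : ℝ≥0∞) = ENNReal.ofReal (g u / (‖u + 1‖ * ‖u - 1‖)) := by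
      rw [← enorm_eq_nnnorm, ← ofReal_norm, hnorm]
    rw [hcoe]
    have hplus : ‖u - (-1)‖ = ‖u + 1‖ := by norm_num
    by_cases hm1 : u ∈ Metric.ball (-1:ℂ) 1
    · have hd : ‖u - (-1)‖ < 1 := by
        rw [Metric.mem_ball, dist_eq_norm] at hm1; exact hm1
      have hfar : 1 ≤ ‖u - 1‖ := by
        have h2 : (2:ℝ) ≤ ‖u - (-1)‖ + ‖u - 1‖ := by
          calc (2:ℝ) = ‖((u - (-1)) - (u - 1) : ℂ)‖ := by norm_num
          _ ≤ ‖u - (-1)‖ + ‖u - 1‖ := norm_sub_le _ _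
        linarith
      have hle : g u / (‖u + 1‖ * ‖u - 1‖) ≤ ‖u - (-1)‖⁻¹ := by
        rw [hplus, div_eq_mul_inv, mul_inv]
        have hinv1 : ‖u - 1‖⁻¹ ≤ 1 := by
          rw [inv_le_one_iff₀]
          exact Or.inr hfar
        calc g u * (‖u + 1‖⁻¹ * ‖u - 1‖⁻¹) ≤ 1 * (‖u + 1‖⁻¹ * 1) := by
              apply mul_le_mul hu2.2 ?_ (by positivity) zero_le_one
              exact mul_le_mul_of_nonneg_left hinv1 (by positivity)
          _ = ‖u + 1‖⁻¹ := by ring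
        
      calc ENNReal.ofReal (g u / (‖u + 1‖ * ‖u - 1‖)) ≤ f₁ u := by
            rw [hf₁, indicator_of_mem hm1]
            exact ENNReal.ofReal_le_ofReal hle
        _ ≤ f₁ u + f₂ u + f₃ u := le_trans (self_le_add_right _ _) (self_le_add_right _ _)
    · by_cases hm2 : u ∈ Metric.ball (1:ℂ) 1
      · have hd : ‖u - 1‖ < 1 := by
          rw [Metric.mem_ball, dist_eq_norm] at hm2; exact hm2
        have hfar : 1 ≤ ‖u + 1‖ := by
          have h2 : (2:ℝ) ≤ ‖u - 1‖ + ‖u - (-1)‖ := by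
            calc (2:ℝ) = ‖((u - (-1)) - (u - 1) : ℂ)‖ := by norm_num
            _ ≤ ‖u - (-1)‖ + ‖u - 1‖ := norm_sub_le _ _
            _ = ‖u - 1‖ + ‖u - (-1)‖ := by ring
          rw [hplus] at h2
          linarith
        have hle : g u / (‖u + 1‖ * ‖u - 1‖) ≤ ‖u - 1‖⁻¹ := by
          rw [div_eq_mul_inv, mul_inv]
          have hinv1 : ‖u + 1‖⁻¹ ≤ 1 := by
            rw [inv_le_one_iff₀]
            exact Or.inr hfar
          calc g u * (‖u + 1‖⁻¹ * ‖u - 1‖⁻¹) ≤ 1 * (1 * ‖u - 1‖⁻¹) := by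
                apply mul_le_mul hu2.2 ?_ (by positivity) zero_le_one
                exact mul_le_mul_of_nonneg_right hinv1 (by positivity)
            _ = ‖u - 1‖⁻¹ := by ring
        calc ENNReal.ofReal (g u / (‖u + 1‖ * ‖u - 1‖)) ≤ f₂ u := by
              rw [hf₂, indicator_of_mem hm2]
              exact ENNReal.ofReal_le_ofReal hle
          _ ≤ f₁ u + f₂ u + f₃ u :=
            le_trans (self_le_add_left _ _) (self_le_add_right _ _)
      · have hfar1 : 1 ≤ ‖u + 1‖ := by
          rw [Metric.mem_ball, dist_eq_norm, not_lt, hplus] at hm1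
          exact hm1
        have hfar2 : 1 ≤ ‖u - 1‖ := by
          rw [Metric.mem_ball, dist_eq_norm, not_lt] at hm2
          exact hm2
        have hle : g u / (‖u + 1‖ * ‖u - 1‖) ≤ 1 := by
          apply div_le_one_of_le₀
          · nlinarith [hu2.2]
          · positivity
        calc ENNReal.ofReal (g u / (‖u + 1‖ * ‖u - 1‖)) ≤ f₃ u := by
              rw [hf₃, indicator_of_mem]
              · calc ENNReal.ofReal (g u / (‖u + 1‖ * ‖u - 1‖)) ≤ ENNReal.ofReal 1 :=
                    ENNReal.ofReal_le_ofReal hle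
                  _ = 1 := ENNReal.ofReal_one
              · rw [Metric.mem_closedBall, dist_zero_right]
                exact le_trans hRu (le_max_left _ _)
          _ ≤ f₁ u + f₂ u + f₃ u := self_le_add_left _ _
  have hBfin : (∫⁻ u, (f₁ u + f₂ u + f₃ u)) < ⊤ := by
    rw [lintegral_add_right _ m3, lintegral_add_right _ m2]
    have h1 : ∫⁻ u, f₁ u < ⊤ := by
      rw [hf₁, lintegral_indicator measurableSet_ball _]
      exact lintegral_ball_inv_norm (-1)
    have h2 : ∫⁻ u, f₂ u < ⊤ := by
      rw [hf₂, lintegral_indicator measurableSet_ball _]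
      exact lintegral_ball_inv_norm 1
    have h3 : ∫⁻ u, f₃ u < ⊤ := by
      rw [hf₃, lintegral_indicator measurableSet_closedBall _, setLIntegral_one]
      exact measure_closedBall_lt_top
    exact ENNReal.add_lt_top.2 ⟨ENNReal.add_lt_top.2 ⟨h1, h2⟩, h3⟩
  have hHint : Integrable H := by
    refine ⟨hHmeas.aestronglyMeasurable, ?_⟩
    exact lt_of_le_of_lt (lintegral_mono_ae hdom) hBfin
  have hgP_int : Integrable (fun u => g u * Pfun u) := by
    refine (hHint.re.neg).congr (Filter.Eventually.of_forall fun u => ?_)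
    simp only [Pi.neg_apply, RCLike.re_to_complex, hH_def]
    rw [H_re g u, neg_neg]
  have hPint : IntegrableOn Pfun (Metric.ball (0:ℂ) 1) := by
    refine ⟨measurable_Pfun.aestronglyMeasurable, ?_⟩
    have heq : ∫⁻ u in Metric.ball (0:ℂ) 1, (‖Pfun u‖₊ : ℝ≥0∞)
        = ∫⁻ u in Metric.ball (0:ℂ) 1, ENNReal.ofReal (Pfun u) :=
      setLIntegral_congr_fun_ae measurableSet_ball (Filter.Eventually.of_forall fun u hu => by
        rw [← enorm_eq_nnnorm, ← ofReal_norm, Real.norm_eq_abs, abs_of_nonneg (Pfun_nonneg_ball hu)])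
    show ∫⁻ u in Metric.ball (0:ℂ) 1, (‖Pfun u‖₊ : ℝ≥0∞) < ⊤
    rw [heq, lintegral_ball_P]
    exact ENNReal.ofReal_lt_top
  have hlog2 : (0:ℝ) ≤ π * Real.log 2 := mul_nonneg hπ.le (Real.log_nonneg one_le_two)
  have hIb : ∫ u in Metric.ball (0:ℂ) 1, Pfun u = π * Real.log 2 := by
    rw [integral_eq_lintegral_of_nonneg_ae ((ae_restrict_iff' measurableSet_ball).2
        (Filter.Eventually.of_forall fun u hu => Pfun_nonneg_ball hu))
      measurable_Pfun.aestronglyMeasurable.restrict]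
    rw [lintegral_ball_P, ENNReal.toReal_ofReal hlog2]
  have hmono : ∫ u, g u * Pfun u ≤ π * Real.log 2 := by
    rw [← hIb, ← integral_indicator measurableSet_ball]
    refine integral_mono_ae hgP_int (hPint.integrable_indicator measurableSet_ball) ?_
    filter_upwards [hbd] with u hu
    by_cases hm : u ∈ Metric.ball (0:ℂ) 1
    · rw [indicator_of_mem hm]
      nlinarith [Pfun_nonneg_ball hm, hu.1, hu.2]
    · rw [indicator_of_notMem hm]
      nlinarith [Pfun_nonpos hm, hu.1]
  have hreInt : (∫ u, H u).re = - ∫ u, g u * Pfun u := by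
    have h2 := integral_re hHint
    have h3 : (fun u => RCLike.re (H u)) = fun u => -(g u * Pfun u) := by
      funext u
      simp only [RCLike.re_to_complex, hH_def, H_re g u]
    rw [h3] at h2
    rw [integral_neg, RCLike.re_to_complex] at h2
    exact h2.symm
  have hcoef : (-(1 / (Real.pi:ℂ))) = ((-(1/π) : ℝ) : ℂ) := by push_cast; ring
  have hre_Ig : (Ig g).re = (1/π) * ∫ u, g u * Pfun u := by
    rw [Ig, hcoef, Complex.re_ofReal_mul, ← hH_def]
    rw [hreInt]
    ring
  rw [hre_Ig]
  calc (1/π) * ∫ u, g u * Pfun u ≤ (1/π) * (π * Real.log 2) := by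
        apply mul_le_mul_of_nonneg_left hmono (by positivity)
    _ = Real.log 2 := by
        field_simp

end main
end
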